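/- arXiv:2302.04718 — 6 statements merged into one kernel-verified Lean document; each statement's English description precedes it below -/
import Mathlib

section
/- Let q = p^h with p prime, let n ≥ 2, and let (P, B) be a finite incidence structure such that every pair of distinct points lies in at most λ blocks (λ ≥ 1) and every point lies in at least m + λ blocks (m ≥ 0). Let c : P → 𝔽_p be a nonzero function such that for every block B ∈ B the sum ∑_{x ∈ B} c(x) equals 0 in 𝔽_p. Then the weight of c satisfies λ · p · wt(c) ≥ 2((m + λ)p − m). -/
open Finset

private lemma msum_if {β : Type*} (M : Multiset β) (q : β → Prop) [DecidablePred q] (v : ℕ) :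
    (M.map (fun b => if q b then v else 0)).sum = (M.filter q).card * v := by
  induction M using Multiset.induction with
  | empty => simp
  | cons a s ih =>
      by_cases h : q a <;>
        simp [h, ih, Multiset.filter_cons, Nat.add_mul, Nat.add_comm]

private lemma msum_swap {β γ : Type*} (M : Multiset β) (A : Finset γ) (g : β → γ → ℕ) :
    (M.map (fun b => ∑ y ∈ A, g b y)).sum = ∑ y ∈ A, (M.map (fun b => g b y)).sum := by
  induction M using Multiset.induction with
  | empty => simp
  | cons a s ih => simp [ih, Finset.sum_add_distrib]

private lemma count_bound {P : Type*} [DecidableEq P]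
    (B : Multiset (Finset P)) (lam : ℕ)
    (hpair : ∀ x y : P, x ≠ y → (B.filter (fun b => x ∈ b ∧ y ∈ b)).card ≤ lam)
    (x : P) (A : Finset P) (hA : x ∉ A) (v : P → ℕ) (L : ℕ)
    (hL : ∀ b ∈ B, x ∈ b → L ≤ ∑ y ∈ A, (if y ∈ b then v y else 0)) :
    (B.filter (fun b => x ∈ b)).card * L ≤ lam * ∑ y ∈ A, v y := by
  have h1 : (B.filter (fun b => x ∈ b)).card * L ≤
      ((B.filter (fun b => x ∈ b)).map (fun b => ∑ y ∈ A, (if y ∈ b then v y else 0))).sum := by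
    have := Multiset.card_nsmul_le_sum
      (s := (B.filter (fun b => x ∈ b)).map (fun b => ∑ y ∈ A, (if y ∈ b then v y else 0)))
      (a := L) (by
        intro t ht
        obtain ⟨b, hb, rfl⟩ := Multiset.mem_map.mp ht
        have hb' := Multiset.mem_filter.mp hb
        exact hL b hb'.1 hb'.2)
    simpa [Multiset.card_map, smul_eq_mul] using this
  have h2 : ((B.filter (fun b => x ∈ b)).map
        (fun b => ∑ y ∈ A, (if y ∈ b then v y else 0))).sum
      = ∑ y ∈ A, ((B.filter (fun b => x ∈ b ∧ y ∈ b)).card * v y) := by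
    rw [msum_swap]
    refine Finset.sum_congr rfl (fun y hy => ?_)
    rw [msum_if, Multiset.filter_filter]
    have hcomm : Multiset.filter (fun a => y ∈ a ∧ x ∈ a) B
        = Multiset.filter (fun b => x ∈ b ∧ y ∈ b) B :=
      Multiset.filter_congr (fun b _ => by tauto)
    rw [hcomm]
  have h3 : ∑ y ∈ A, ((B.filter (fun b => x ∈ b ∧ y ∈ b)).card * v y)
      ≤ ∑ y ∈ A, lam * v y := by
    refine Finset.sum_le_sum (fun y hy => ?_)
    have hxy : x ≠ y := fun h => hA (h ▸ hy)
    exact Nat.mul_le_mul_right _ (hpair x y hxy)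
  calc (B.filter (fun b => x ∈ b)).card * L
      ≤ _ := h1
    _ = _ := h2
    _ ≤ ∑ y ∈ A, lam * v y := h3
    _ = lam * ∑ y ∈ A, v y := (Finset.mul_sum _ _ _).symm

private lemma keyI {P : Type*} [Fintype P] [DecidableEq P] {p : ℕ} (hp : p.Prime)
    (B : Multiset (Finset P)) (lam m : ℕ)
    (hpair : ∀ x y : P, x ≠ y → (B.filter (fun b => x ∈ b ∧ y ∈ b)).card ≤ lam)
    (hpt : ∀ x : P, m + lam ≤ (B.filter (fun b => x ∈ b)).card)
    (d : P → ZMod p) (hdual : ∀ b ∈ B, ∑ y ∈ b, d y = 0)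
    (x : P) (hx : d x ≠ 0) :
    (m + lam) * (p - (d x).val) ≤ lam * ∑ y ∈ Finset.univ.erase x, (d y).val := by
  haveI : Fact p.Prime := ⟨hp⟩
  have hL : ∀ b ∈ B, x ∈ b →
      p - (d x).val ≤ ∑ y ∈ Finset.univ.erase x, (if y ∈ b then (d y).val else 0) := by
    intro b hb hxb
    have hset : Finset.univ.erase x ∩ b = b.erase x := by
      ext z
      simp only [Finset.mem_inter, Finset.mem_erase, Finset.mem_univ, true_and]
      tauto
    rw [Finset.sum_ite_mem, hset]
    set s := ∑ y ∈ b.erase x, (d y).val with hs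
    have hsum : ∑ y ∈ b.erase x, d y = - d x := by
      have h0 := hdual b hb
      have h1 := Finset.add_sum_erase b d hxb
      rw [h0] at h1
      linear_combination h1
    have hcast : (s : ZMod p) = - d x := by
      rw [hs, Nat.cast_sum, ← hsum]
      exact Finset.sum_congr rfl (fun y _ => ZMod.natCast_rightInverse _)
    have hmod : s % p = (- d x).val := by
      have := ZMod.val_natCast (n := p) s
      rw [hcast] at this
      exact this.symm
    have hneg : (- d x).val = p - (d x).val := by
      rw [ZMod.neg_val, if_neg hx]
    have := Nat.mod_le s p
    omega
  have h2 := count_bound B lam hpair x (Finset.univ.erase x) (Finset.notMem_erase _ _)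
    (fun y => (d y).val) (p - (d x).val) hL
  calc (m + lam) * (p - (d x).val)
      ≤ (B.filter (fun b => x ∈ b)).card * (p - (d x).val) :=
        Nat.mul_le_mul_right _ (hpt x)
    _ ≤ _ := h2

/-- Let `q = p ^ h` with `p` prime and `n ≥ 2`, and let
`(P, B)` be a finite incidence structure (blocks form a multiset of finsets of
points) in which every pair of distinct points lies in at most `lam` blocks
(`lam ≥ 1`) and every point lies in at least `m + lam` blocks.  If
`c : P → 𝔽_p` is a nonzero function summing to zero on every block, then
`lam * p * wt(c) ≥ 2 * ((m + lam) * p - m)`. -/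
theorem stmt0 (p h q n : ℕ) (hp : p.Prime) (hq : q = p ^ h) (hn : 2 ≤ n)
    {P : Type*} [Fintype P] [DecidableEq P]
    (B : Multiset (Finset P)) (lam m : ℕ) (hlam : 1 ≤ lam)
    (hpair : ∀ x y : P, x ≠ y →
      (B.filter (fun b => x ∈ b ∧ y ∈ b)).card ≤ lam)
    (hpt : ∀ x : P, m + lam ≤ (B.filter (fun b => x ∈ b)).card)
    (c : P → ZMod p) (hc : c ≠ 0)
    (hdual : ∀ b ∈ B, ∑ x ∈ b, c x = 0) :
    2 * ((m + lam) * p - m) ≤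
      lam * p * (Finset.univ.filter (fun x => c x ≠ 0)).card := by
  haveI : Fact p.Prime := ⟨hp⟩
  haveI : Fact (1 < p) := ⟨hp.one_lt⟩
  set S := Finset.univ.filter (fun x => c x ≠ 0) with hS
  set w := S.card with hw
  have hp2 : 2 ≤ p := hp.two_le
  obtain ⟨x0, hx0⟩ : ∃ x, c x ≠ 0 := Function.ne_iff.mp hc
  have hx0S : x0 ∈ S := by simp [hS, hx0]
  have hw1 : 1 ≤ w := Finset.card_pos.mpr ⟨x0, hx0S⟩
  by_cases hex : ∃ x y : P, c x ≠ 0 ∧ c y = - c x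
  · -- Case A
    obtain ⟨x, y, hx, hy⟩ := hex
    set d : P → ZMod p := fun z => (c x)⁻¹ * c z with hd
    have hdx : d x = 1 := inv_mul_cancel₀ hx
    set e : P → ZMod p := fun z => - d z with he
    have hdy : e y = 1 := by
      rw [he, hd]
      simp only []
      rw [hy, mul_neg, inv_mul_cancel₀ hx, neg_neg]
    have hduald : ∀ b ∈ B, ∑ z ∈ b, d z = 0 := by
      intro b hb
      rw [hd]
      rw [← Finset.mul_sum, hdual b hb, mul_zero]
    have hduale : ∀ b ∈ B, ∑ z ∈ b, e z = 0 := by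
      intro b hb
      rw [he]
      simp only [Finset.sum_neg_distrib, hduald b hb, neg_zero]
    have hA1 := keyI hp B lam m hpair hpt d hduald x (by rw [hdx]; exact one_ne_zero)
    have hA2 := keyI hp B lam m hpair hpt e hduale y
      (by rw [hdy]; exact one_ne_zero)
    have hvx : (d x).val = 1 := by rw [hdx, ZMod.val_one]
    have hvy : (e y).val = 1 := by rw [hdy, ZMod.val_one]
    rw [hvx] at hA1
    rw [hvy] at hA2
    -- sum of the two erase-sums is p*w - 2
    have hTot : (∑ z : P, (d z).val) + (∑ z : P, (e z).val) = p * w := by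
      rw [← Finset.sum_add_distrib]
      have : ∀ z : P, (d z).val + (e z).val = if c z ≠ 0 then p else 0 := by
        intro z
        by_cases hz : c z = 0
        · simp [he, hd, hz]
        · have hdz : d z ≠ 0 := by
            simp only [hd]
            exact mul_ne_zero (inv_ne_zero hx) hz
          rw [he]
          simp only []
          rw [ZMod.neg_val, if_neg hdz, if_pos hz]
          have := ZMod.val_lt (d z)
          omega
      rw [Finset.sum_congr rfl (fun z _ => this z)]
      rw [Finset.sum_ite, Finset.sum_const, Finset.sum_const]
      simp [hS, hw, mul_comm]
    have hE1 : (d x).val + ∑ z ∈ Finset.univ.erase x, (d z).val = ∑ z : P, (d z).val :=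
      Finset.add_sum_erase Finset.univ (fun z => (d z).val) (Finset.mem_univ x)
    have hE2 : (e y).val + ∑ z ∈ Finset.univ.erase y, (e z).val
        = ∑ z : P, (e z).val :=
      Finset.add_sum_erase Finset.univ (fun z => (e z).val) (Finset.mem_univ y)
    rw [hvx] at hE1
    rw [hvy] at hE2
    -- combine
    have hsum2 : 2 * ((m + lam) * (p - 1)) + 2 * lam ≤ lam * (p * w) := by
      have h1 : (m + lam) * (p - 1) ≤ lam * ∑ z ∈ Finset.univ.erase x, (d z).val := hA1
      have h2 : (m + lam) * (p - 1) ≤ lam * ∑ z ∈ Finset.univ.erase y, (e z).val := hA2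
      have h3 : (∑ z ∈ Finset.univ.erase x, (d z).val)
          + (∑ z ∈ Finset.univ.erase y, (e z).val) + 2 = p * w := by omega
      nlinarith [h1, h2, h3]
    have hrp : (m + lam) * p = (m + lam) * (p - 1) + (m + lam) := by
      obtain ⟨t, rfl⟩ : ∃ t, p = t + 1 := ⟨p - 1, by omega⟩
      simp only [Nat.add_sub_cancel]
      ring
    have : lam * p * w = lam * (p * w) := by ring
    rw [this]
    omega
  · -- Case B
    push_neg at hex
    have hL : ∀ b ∈ B, x0 ∈ b →
        2 ≤ ∑ y ∈ S.erase x0, (if y ∈ b then (1 : ℕ) else 0) := by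
      intro b hb hxb
      rw [Finset.sum_ite_mem, Finset.sum_const, smul_eq_mul, mul_one]
      by_contra hcard
      have hF : (S.erase x0) ∩ b = Finset.filter (fun y => c y ≠ 0) (b.erase x0) := by
        ext z
        simp only [Finset.mem_inter, Finset.mem_erase, Finset.mem_filter, hS,
          Finset.mem_univ, true_and]
        tauto
      have hsumF : c x0 + ∑ z ∈ (S.erase x0) ∩ b, c z = 0 := by
        rw [hF, Finset.sum_filter_ne_zero, Finset.add_sum_erase b c hxb]
        exact hdual b hb
      interval_cases hcc : ((S.erase x0) ∩ b).card
      · rw [Finset.card_eq_zero.mp hcc] at hsumF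
        simp at hsumF
        exact hx0 hsumF
      · obtain ⟨z0, hz0⟩ := Finset.card_eq_one.mp hcc
        rw [hz0, Finset.sum_singleton] at hsumF
        exact hex x0 z0 hx0 (by linear_combination hsumF)
    have h2 := count_bound B lam hpair x0 (S.erase x0) (Finset.notMem_erase _ _)
      (fun _ => 1) 2 hL
    have hcardle : (m + lam) ≤ (B.filter (fun b => x0 ∈ b)).card := hpt x0
    have hse : ∑ y ∈ S.erase x0, (1 : ℕ) = (S.erase x0).card := by
      rw [Finset.sum_const, smul_eq_mul, mul_one]
    rw [hse] at h2
    have hwle : (S.erase x0).card ≤ w := Finset.card_le_card (Finset.erase_subset _ _)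
    have hmain : 2 * (m + lam) ≤ lam * w := by
      calc 2 * (m + lam) = (m + lam) * 2 := by ring
        _ ≤ (B.filter (fun b => x0 ∈ b)).card * 2 := Nat.mul_le_mul_right _ hcardle
        _ ≤ lam * (S.erase x0).card := h2
        _ ≤ lam * w := Nat.mul_le_mul_left _ hwle
    calc 2 * ((m + lam) * p - m) ≤ 2 * ((m + lam) * p) :=
          Nat.mul_le_mul_left _ (Nat.sub_le _ _)
      _ = (2 * (m + lam)) * p := by ring
      _ ≤ (lam * w) * p := Nat.mul_le_mul_right _ hmain
      _ = lam * p * w := by ring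
end

section
/- Let q be an even prime power, let S be a set of even type of size q(q+2) in PG(3,q), and let π be a plane. Then |S ∩ π| ≤ 2q. Moreover, if |S ∩ π| = 2q, then for every plane ρ ≠ π, the line π ∩ ρ is either disjoint from S or is a Rédei line of ρ with respect to S, i.e. |(S ∩ ρ) \ (π ∩ ρ)| = q. -/
open Submodule

/-- The points of the projective space `PG(n, K)`: the 1-dimensional
`K`-subspaces of `K^{n+1}`. -/
def PGPoint (K : Type*) [Field K] (n : ℕ) : Type _ :=
  {W : Submodule K (Fin (n + 1) → K) // Module.finrank K W = 1}

/-- The set of points of `PG(n, K)` lying in a given linear subspace. -/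
def pts {K : Type*} [Field K] {n : ℕ} (W : Submodule K (Fin (n + 1) → K)) :
    Set (PGPoint K n) :=
  {P | P.1 ≤ W}

/-- `S` is a `k`-dimensional projective subspace of `PG(n, K)`. -/
def IsKSpace {K : Type*} [Field K] {n : ℕ} (k : ℕ) (S : Set (PGPoint K n)) : Prop :=
  ∃ W : Submodule K (Fin (n + 1) → K), Module.finrank K W = k + 1 ∧ S = pts W

/-- A set of points is of even type if every line meets it in an even
number of points. -/
def IsEvenType {K : Type*} [Field K] {n : ℕ} (S : Set (PGPoint K n)) : Prop :=
  ∀ L : Set (PGPoint K n), IsKSpace 1 L → Even (S ∩ L).ncard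

/-- `O` is a hyperoval in the plane `π`: a set of `q + 2` points of `π`,
no three of which are collinear. -/
def IsHyperovalIn {K : Type*} [Field K] {n : ℕ}
    (π O : Set (PGPoint K n)) : Prop :=
  O ⊆ π ∧ O.ncard = Nat.card K + 2 ∧
    ∀ L : Set (PGPoint K n), IsKSpace 1 L → (O ∩ L).ncard ≤ 2

/-- A hypercylinder in `PG(n, K)`, `n ≥ 3`: the set
`(⋃_{P ∈ O} ⟨P, τ⟩) \ τ`, where `O` is a hyperoval in a plane `π` and the
vertex `τ` is an `(n-3)`-dimensional projective subspace (linear dimension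
`n - 2`) disjoint from `π`.  (For `n = 3` the vertex is a point.) -/
def IsHypercylinder {K : Type*} [Field K] {n : ℕ}
    (S : Set (PGPoint K n)) : Prop :=
  ∃ (Wπ T : Submodule K (Fin (n + 1) → K)) (O : Set (PGPoint K n)),
    Module.finrank K Wπ = 3 ∧ Module.finrank K T = n - 2 ∧ Wπ ⊓ T = ⊥ ∧
    IsHyperovalIn (pts Wπ) O ∧
    S = {Q : PGPoint K n | (∃ P ∈ O, Q.1 ≤ P.1 ⊔ T) ∧ ¬ Q.1 ≤ T}

section Aux

open Finset Module

lemma geom_aux {q : ℕ} (hq : 1 ≤ q) (d : ℕ) :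
    (∑ i ∈ Finset.range d, q ^ i) * (q - 1) + 1 = q ^ d := by
  induction d with
  | zero => simp
  | succ d ih =>
    rw [Finset.sum_range_succ, add_mul]
    have h1 : 1 ≤ q ^ d := Nat.one_le_pow _ _ hq
    have h2 : q ^ d * (q - 1) = q ^ (d + 1) - q ^ d := by
      rw [Nat.mul_sub, mul_one, pow_succ]
    have h4 : q ^ d ≤ q ^ (d + 1) := Nat.pow_le_pow_right (by omega) (by omega)
    omega

variable {K : Type*} [Field K] [Finite K] {n : ℕ}

instance : Finite (Submodule K (Fin (n + 1) → K)) :=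
  Finite.of_injective (fun W => (W : Set (Fin (n + 1) → K))) SetLike.coe_injective

instance : Finite (PGPoint K n) := by
  unfold PGPoint; infer_instance

/-- partition counting lemma -/
lemma ncard_partition {α ι : Type*} [Finite α] (t : Finset ι) (g : ι → Set α) (A : Set α)
    (hU : A ⊆ ⋃ i ∈ t, g i) (hsub : ∀ i ∈ t, g i ⊆ A)
    (hdisj : (t : Set ι).PairwiseDisjoint g) :
    A.ncard = ∑ i ∈ t, (g i).ncard := by
  classical
  haveI := Fintype.ofFinite α
  have hA : A = ⋃ i ∈ t, g i := by
    refine subset_antisymm hU ?_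
    exact Set.iUnion₂_subset hsub
  have hfin : A.toFinset = t.biUnion (fun i => (g i).toFinset) := by
    ext x
    simp [hA, Set.mem_iUnion]
  rw [Set.ncard_eq_toFinset_card', hfin, Finset.card_biUnion]
  · exact Finset.sum_congr rfl fun i _ => (Set.ncard_eq_toFinset_card' _).symm
  · intro i hi j hj hij
    have := hdisj hi hj hij
    simpa [Finset.disjoint_left, Set.disjoint_left] using this

lemma point_eq_of_le {P Q : PGPoint K n} (h : P.1 ≤ Q.1) : P = Q :=
  Subtype.ext (Submodule.eq_of_le_of_finrank_eq h (P.2.trans Q.2.symm))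

lemma finrank_sup_points {P Q : PGPoint K n} (h : P ≠ Q) :
    finrank K ↥(P.1 ⊔ Q.1) = 2 := by
  have hs := Submodule.finrank_sup_add_finrank_inf_eq P.1 Q.1
  rw [P.2, Q.2] at hs
  have hlt : P.1 ⊓ Q.1 < P.1 := by
    refine lt_of_le_of_ne inf_le_left fun he => h ?_
    exact point_eq_of_le (he ▸ inf_le_right)
  have := Submodule.finrank_lt_finrank_of_lt hlt
  rw [P.2] at this
  omega

lemma line_eq_sup {W : Submodule K (Fin (n + 1) → K)} (hW : finrank K W = 2)
    {P Q : PGPoint K n} (hP : P.1 ≤ W) (hQ : Q.1 ≤ W) (hne : P ≠ Q) :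
    W = P.1 ⊔ Q.1 :=
  (Submodule.eq_of_le_of_finrank_eq (sup_le hP hQ)
    (by rw [finrank_sup_points hne, hW])).symm

/-- cardinality of the point set of a subspace -/
lemma ncard_pts (W : Submodule K (Fin (n + 1) → K)) :
    (pts W).ncard = ∑ i ∈ Finset.range (finrank K W), Nat.card K ^ i := by
  classical
  haveI := Fintype.ofFinite K
  set q := Nat.card K with hqdef
  have hq2 : 2 ≤ q := by
    rw [hqdef, Nat.card_eq_fintype_card]
    exact Fintype.one_lt_card
  -- count nonzero vectors of W, fibered over points
  have key : ({v : Fin (n+1) → K | v ∈ W ∧ v ≠ 0}).ncard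
      = ∑ P ∈ (pts W : Set (PGPoint K n)).toFinite.toFinset,
          ({v : Fin (n+1) → K | v ∈ P.1 ∧ v ≠ 0}).ncard := by
    apply ncard_partition
    · rintro v ⟨hvW, hv0⟩
      have hPmem : (⟨Submodule.span K {v}, finrank_span_singleton hv0⟩ : PGPoint K n) ∈ pts W := by
        exact (Submodule.span_singleton_le_iff_mem v W).2 hvW
      refine Set.mem_iUnion₂.2 ⟨⟨Submodule.span K {v}, finrank_span_singleton hv0⟩,
        (Set.Finite.mem_toFinset _).2 hPmem, ?_⟩
      exact ⟨Submodule.mem_span_singleton_self v, hv0⟩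
    · intro P hP v hv
      have hPW : P.1 ≤ W := (Set.Finite.mem_toFinset _).1 hP
      exact ⟨hPW hv.1, hv.2⟩
    · intro P hP Q hQ hne
      rw [Function.onFun, Set.disjoint_left]
      rintro v ⟨hvP, hv0⟩ ⟨hvQ, _⟩
      apply hne
      have h1 : Submodule.span K {v} = P.1 :=
        Submodule.eq_of_le_of_finrank_eq ((Submodule.span_singleton_le_iff_mem v _).2 hvP)
          (by rw [finrank_span_singleton hv0, P.2])
      have h2 : Submodule.span K {v} = Q.1 :=
        Submodule.eq_of_le_of_finrank_eq ((Submodule.span_singleton_le_iff_mem v _).2 hvQ)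
          (by rw [finrank_span_singleton hv0, Q.2])
      exact Subtype.ext (h1.symm.trans h2)
  -- card of nonzero vectors of a submodule U : q ^ finrank U - 1
  have hcardU : ∀ U : Submodule K (Fin (n+1) → K),
      ({v : Fin (n+1) → K | v ∈ U ∧ v ≠ 0}).ncard = q ^ finrank K U - 1 := by
    intro U
    have h1 : {v : Fin (n+1) → K | v ∈ U ∧ v ≠ 0} = (U : Set (Fin (n+1) → K)) \ {0} := by
      ext v; simp [and_comm]
    rw [h1, Set.ncard_diff_singleton_of_mem (Submodule.zero_mem U)]
    congr 1
    rw [← Nat.card_coe_set_eq]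
    have : Nat.card U = Fintype.card U := Nat.card_eq_fintype_card
    rw [show ((U : Set (Fin (n+1) → K))) = (U : Set _) from rfl]
    calc Nat.card (U : Set (Fin (n+1) → K)) = Nat.card U := rfl
      _ = Fintype.card U := Nat.card_eq_fintype_card
      _ = Fintype.card K ^ finrank K U := card_eq_pow_finrank
      _ = q ^ finrank K U := by rw [hqdef, Nat.card_eq_fintype_card]
  rw [hcardU W] at key
  have hfib : ∀ P ∈ (pts W : Set (PGPoint K n)).toFinite.toFinset,
      ({v : Fin (n+1) → K | v ∈ P.1 ∧ v ≠ 0}).ncard = q - 1 := by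
    intro P _
    rw [hcardU P.1, P.2, pow_one]
  rw [Finset.sum_congr rfl hfib, Finset.sum_const, smul_eq_mul] at key
  have hcard : (pts W).toFinite.toFinset.card = (pts W).ncard :=
    (Set.ncard_eq_toFinset_card _ _).symm
  rw [hcard] at key
  -- key : q ^ finrank W - 1 = (pts W).ncard * (q-1)
  have hg := geom_aux (by omega : 1 ≤ q) (finrank K W)
  have hpow : 1 ≤ q ^ finrank K W := Nat.one_le_pow _ _ (by omega)
  have heq : (pts W).ncard * (q - 1) = (∑ i ∈ Finset.range (finrank K W), q ^ i) * (q - 1) := by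
    omega
  exact Nat.eq_of_mul_eq_mul_right (by omega) heq

end Aux

section Geo

open Finset Module

variable {K : Type*} [Field K] [Finite K] {n : ℕ}

lemma ncard_eq_sum_lines (P : PGPoint K n) (t : Finset (Submodule K (Fin (n+1) → K)))
    (ht : ∀ W ∈ t, finrank K W = 2 ∧ P.1 ≤ W)
    (A : Set (PGPoint K n)) (hPA : P ∉ A)
    (hcov : ∀ Q ∈ A, ∃ W ∈ t, Q.1 ≤ W) :
    A.ncard = ∑ W ∈ t, (A ∩ pts W).ncard := by
  apply ncard_partition
  · intro Q hQ
    obtain ⟨W, hWt, hle⟩ := hcov Q hQ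
    exact Set.mem_iUnion₂.2 ⟨W, hWt, hQ, hle⟩
  · exact fun W _ => Set.inter_subset_left
  · intro W1 h1 W2 h2 hne
    rw [Function.onFun, Set.disjoint_left]
    rintro Q ⟨hQA, hQ1⟩ ⟨_, hQ2⟩
    have hQP : (P : PGPoint K n) ≠ Q := fun h => hPA (h ▸ hQA)
    exact hne ((line_eq_sup (ht W1 h1).1 (ht W1 h1).2 hQ1 hQP).trans
      (line_eq_sup (ht W2 h2).1 (ht W2 h2).2 hQ2 hQP).symm)

/-- The lines through `P` contained in `U`, as a finset of submodules. -/
noncomputable def linesThruIn (P : PGPoint K n) (U : Submodule K (Fin (n+1) → K)) :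
    Finset (Submodule K (Fin (n+1) → K)) :=
  (Set.toFinite {W : Submodule K (Fin (n+1) → K) |
    finrank K W = 2 ∧ P.1 ≤ W ∧ W ≤ U}).toFinset

lemma mem_linesThruIn {P : PGPoint K n} {U W : Submodule K (Fin (n+1) → K)} :
    W ∈ linesThruIn P U ↔ finrank K W = 2 ∧ P.1 ≤ W ∧ W ≤ U :=
  Set.Finite.mem_toFinset _

lemma sup_mem_linesThruIn {P Q : PGPoint K n} {U : Submodule K (Fin (n+1) → K)}
    (hne : P ≠ Q) (hP : P.1 ≤ U) (hQ : Q.1 ≤ U) :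
    P.1 ⊔ Q.1 ∈ linesThruIn P U :=
  mem_linesThruIn.2 ⟨finrank_sup_points hne, le_sup_left, sup_le hP hQ⟩

lemma pts_ncard_of_finrank_two {W : Submodule K (Fin (n+1) → K)} (hW : finrank K W = 2) :
    (pts W).ncard = Nat.card K + 1 := by
  rw [ncard_pts, hW]
  simp [Finset.sum_range_succ]
  omega

lemma card_linesThruIn (P : PGPoint K n) (U : Submodule K (Fin (n+1) → K)) (hPU : P.1 ≤ U) :
    (linesThruIn P U).card * Nat.card K + 1 = (pts U).ncard := by
  classical
  set q := Nat.card K with hq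
  have hPin : P ∈ pts U := hPU
  have hsum : (pts U \ {P}).ncard = ∑ W ∈ linesThruIn P U, ((pts U \ {P}) ∩ pts W).ncard := by
    apply ncard_eq_sum_lines P _ (fun W hW => ⟨(mem_linesThruIn.1 hW).1, (mem_linesThruIn.1 hW).2.1⟩)
    · simp
    · rintro Q ⟨hQU, hQP⟩
      have hne : P ≠ Q := fun h => hQP (by simp [h.symm])
      exact ⟨P.1 ⊔ Q.1, sup_mem_linesThruIn hne hPU hQU, le_sup_right⟩
  have hblock : ∀ W ∈ linesThruIn P U, ((pts U \ {P}) ∩ pts W).ncard = q := by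
    intro W hW
    obtain ⟨h2, hPW, hWU⟩ := mem_linesThruIn.1 hW
    have hset : (pts U \ {P}) ∩ pts W = pts W \ {P} := by
      ext Q
      simp only [Set.mem_diff, Set.mem_inter_iff, Set.mem_singleton_iff]
      exact ⟨fun h => ⟨h.2, h.1.2⟩, fun h => ⟨⟨le_trans h.1 hWU, h.2⟩, h.1⟩⟩
    have hPptsW : P ∈ pts W := hPW
    rw [hset, Set.ncard_diff_singleton_of_mem hPptsW,
      pts_ncard_of_finrank_two h2]
    omega
  rw [Finset.sum_congr rfl hblock, Finset.sum_const, smul_eq_mul] at hsum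
  rw [Set.ncard_diff_singleton_of_mem hPin] at hsum
  have hpos : 1 ≤ (pts U).ncard := by
    rw [Nat.one_le_iff_ne_zero, ← Nat.pos_iff_ne_zero]
    exact (Set.ncard_pos (Set.toFinite _)).2 ⟨P, hPin⟩
  omega

lemma sum_lines_S (P : PGPoint K n) (U : Submodule K (Fin (n+1) → K)) (hPU : P.1 ≤ U)
    (S : Set (PGPoint K n)) (hPS : P ∈ S) (hSU : S ⊆ pts U) :
    S.ncard - 1 = ∑ W ∈ linesThruIn P U, ((S ∩ pts W).ncard - 1) := by
  classical
  have hsum : (S \ {P}).ncard = ∑ W ∈ linesThruIn P U, ((S \ {P}) ∩ pts W).ncard := by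
    apply ncard_eq_sum_lines P _ (fun W hW => ⟨(mem_linesThruIn.1 hW).1, (mem_linesThruIn.1 hW).2.1⟩)
    · simp
    · rintro Q ⟨hQS, hQP⟩
      have hne : P ≠ Q := fun h => hQP (by simp [h.symm])
      exact ⟨P.1 ⊔ Q.1, sup_mem_linesThruIn hne hPU (hSU hQS), le_sup_right⟩
  have hblock : ∀ W ∈ linesThruIn P U, ((S \ {P}) ∩ pts W).ncard = (S ∩ pts W).ncard - 1 := by
    intro W hW
    obtain ⟨h2, hPW, hWU⟩ := mem_linesThruIn.1 hW
    have hset : (S \ {P}) ∩ pts W = (S ∩ pts W) \ {P} := by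
      ext Q
      simp only [Set.mem_diff, Set.mem_inter_iff, Set.mem_singleton_iff]
      tauto
    have hPmem : P ∈ S ∩ pts W := ⟨hPS, hPW⟩
    rw [hset, Set.ncard_diff_singleton_of_mem hPmem]
  rw [Finset.sum_congr rfl hblock] at hsum
  rw [Set.ncard_diff_singleton_of_mem hPS] at hsum
  exact hsum

end Geo

section Main

open Finset Module

variable {K : Type*} [Field K] [Finite K]

lemma finrank_top4 : finrank K (⊤ : Submodule K (Fin (3+1) → K)) = 4 := by
  rw [finrank_top]
  exact Module.finrank_fin_fun K

def IsEvenType' {K : Type*} [Field K] {n : ℕ} (S : Set (PGPoint K n)) : Prop :=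
  ∀ L : Set (PGPoint K n), (∃ W : Submodule K (Fin (n+1) → K),
    Module.finrank K W = 2 ∧ L = pts W) → Even (S ∩ L).ncard

lemma key_lemma (hq : Even (Nat.card K)) (S : Set (PGPoint K 3)) (hS : IsEvenType' S)
    (hcard : S.ncard = Nat.card K * (Nat.card K + 2))
    (Wπ : Submodule K (Fin (3+1) → K)) (hWπ : finrank K Wπ = 3)
    (P : PGPoint K 3) (hPS : P ∈ S) (hPπ : P.1 ≤ Wπ) :
    (S ∩ pts Wπ).ncard ≤ 2 * Nat.card K ∧
    ((S ∩ pts Wπ).ncard = 2 * Nat.card K →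
      ∀ W : Submodule K (Fin (3+1) → K), finrank K W = 2 → P.1 ≤ W → ¬ W ≤ Wπ →
        (S ∩ pts W).ncard = 2) := by
  classical
  set q := Nat.card K with hqdef
  have hq1 : 0 < q := Nat.card_pos
  have hq2 : 2 ≤ q := by obtain ⟨k, hk⟩ := hq; omega
  set f : Submodule K (Fin (3+1) → K) → ℕ := fun W => (S ∩ pts W).ncard with hf
  have hNT : (pts (⊤ : Submodule K (Fin (3+1) → K))).ncard = 1 + q + q^2 + q^3 := by
    rw [ncard_pts, finrank_top4]
    simp [Finset.sum_range_succ]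
    rfl
  have hNπ : (pts Wπ).ncard = 1 + q + q^2 := by
    rw [ncard_pts, hWπ]
    simp [Finset.sum_range_succ]
    rfl
  have hLtop : (linesThruIn P (⊤ : Submodule K (Fin (3+1) → K))).card = 1 + q + q^2 := by
    have h := card_linesThruIn P ⊤ le_top
    rw [hNT, ← hqdef] at h
    have h1 : (linesThruIn P (⊤ : Submodule K (Fin (3+1) → K))).card * q = q + q^2 + q^3 := by omega
    have h2 : (1 + q + q^2) * q = q + q^2 + q^3 := by ring
    exact Nat.eq_of_mul_eq_mul_right hq1 (h1.trans h2.symm)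
  have hLπ : (linesThruIn P Wπ).card = 1 + q := by
    have h := card_linesThruIn P Wπ hPπ
    rw [hNπ, ← hqdef] at h
    have h1 : (linesThruIn P Wπ).card * q = q + q^2 := by omega
    have h2 : (1 + q) * q = q + q^2 := by ring
    exact Nat.eq_of_mul_eq_mul_right hq1 (h1.trans h2.symm)
  have hf2 : ∀ W ∈ linesThruIn P (⊤ : Submodule K (Fin (3+1) → K)), 2 ≤ f W := by
    intro W hW
    obtain ⟨h2, hPW, -⟩ := mem_linesThruIn.1 hW
    have heven : Even (f W) := hS (pts W) ⟨W, h2, rfl⟩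
    have hpos : 0 < f W := (Set.ncard_pos (Set.toFinite _)).2 ⟨P, hPS, hPW⟩
    obtain ⟨k, hk⟩ := heven
    omega
  have hsubset : linesThruIn P Wπ ⊆ linesThruIn P (⊤ : Submodule K (Fin (3+1) → K)) := by
    intro W hW
    obtain ⟨h2, hPW, -⟩ := mem_linesThruIn.1 hW
    exact mem_linesThruIn.2 ⟨h2, hPW, le_top⟩
  have hsplit : ∀ t : Finset (Submodule K (Fin (3+1) → K)),
      t ⊆ linesThruIn P (⊤ : Submodule K (Fin (3+1) → K)) →
      ∑ W ∈ t, (f W - 1) = ∑ W ∈ t, (f W - 2) + t.card := by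
    intro t ht
    have : ∑ W ∈ t, (f W - 1) = ∑ W ∈ t, ((f W - 2) + 1) :=
      Finset.sum_congr rfl fun W hW => by have := hf2 W (ht hW); omega
    rw [this, Finset.sum_add_distrib, Finset.sum_const, smul_eq_mul, mul_one]
  have htop : S.ncard - 1 = ∑ W ∈ linesThruIn P (⊤ : Submodule K (Fin (3+1) → K)), (f W - 1) :=
    sum_lines_S P ⊤ le_top S hPS fun Q _ => show Q.1 ≤ ⊤ from le_top
  have hπsum : (S ∩ pts Wπ).ncard - 1 = ∑ W ∈ linesThruIn P Wπ, (f W - 1) := by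
    have h := sum_lines_S P Wπ hPπ (S ∩ pts Wπ) ⟨hPS, hPπ⟩ Set.inter_subset_right
    rw [h]
    refine Finset.sum_congr rfl fun W hW => ?_
    obtain ⟨-, -, hWle⟩ := mem_linesThruIn.1 hW
    have : S ∩ pts Wπ ∩ pts W = S ∩ pts W := by
      rw [Set.inter_assoc]
      congr 1
      exact Set.inter_eq_self_of_subset_right fun Q hQ => le_trans hQ hWle
    rw [this]
  rw [hsplit _ hsubset, hLπ] at hπsum
  rw [hsplit _ (Finset.Subset.refl _), hLtop] at htop
  have hSc : S.ncard = q^2 + 2*q := by rw [hcard]; ring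
  have hm1 : 1 ≤ (S ∩ pts Wπ).ncard :=
    (Set.ncard_pos (Set.toFinite _)).2 ⟨P, hPS, hPπ⟩
  have hle : ∑ W ∈ linesThruIn P Wπ, (f W - 2)
      ≤ ∑ W ∈ linesThruIn P (⊤ : Submodule K (Fin (3+1) → K)), (f W - 2) :=
    Finset.sum_le_sum_of_subset hsubset
  constructor
  · omega
  · intro hm W hW2 hPW hWnle
    have hWt : W ∈ linesThruIn P (⊤ : Submodule K (Fin (3+1) → K)) :=
      mem_linesThruIn.2 ⟨hW2, hPW, le_top⟩
    have hWn : W ∉ linesThruIn P Wπ := fun h => hWnle (mem_linesThruIn.1 h).2.2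
    have hsdiff : ∑ W ∈ linesThruIn P (⊤ : Submodule K (Fin (3+1) → K)) \ linesThruIn P Wπ,
          (f W - 2) + ∑ W ∈ linesThruIn P Wπ, (f W - 2)
        = ∑ W ∈ linesThruIn P (⊤ : Submodule K (Fin (3+1) → K)), (f W - 2) :=
      Finset.sum_sdiff hsubset
    have hzero : ∑ W ∈ linesThruIn P (⊤ : Submodule K (Fin (3+1) → K)) \ linesThruIn P Wπ,
        (f W - 2) = 0 := by omega
    have hfW : f W - 2 = 0 := by
      simpa using (Finset.sum_eq_zero_iff.1 hzero) W (Finset.mem_sdiff.2 ⟨hWt, hWn⟩)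
    have h2 := hf2 W hWt
    have hconn : f W = (S ∩ pts W).ncard := rfl
    omega


def IsEvenType2 {K : Type*} [Field K] {n : ℕ} (S : Set (PGPoint K n)) : Prop :=
  ∀ L : Set (PGPoint K n), (∃ W : Submodule K (Fin (n + 1) → K),
    Module.finrank K W = 1 + 1 ∧ L = pts W) → Even (S ∩ L).ncard

theorem stmt4' {K : Type*} [Field K] [Finite K] (hq : Even (Nat.card K))
    (S : Set (PGPoint K 3)) (hS : IsEvenType2 S)
    (hcard : S.ncard = Nat.card K * (Nat.card K + 2))
    (π : Set (PGPoint K 3)) (hπ : ∃ W : Submodule K (Fin (3+1) → K),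
      Module.finrank K W = 2 + 1 ∧ π = pts W) :
    (S ∩ π).ncard ≤ 2 * Nat.card K ∧
    ((S ∩ π).ncard = 2 * Nat.card K →
      ∀ ρ : Set (PGPoint K 3), (∃ W : Submodule K (Fin (3+1) → K),
          Module.finrank K W = 2 + 1 ∧ ρ = pts W) → ρ ≠ π →
        (π ∩ ρ) ∩ S = ∅ ∨ ((S ∩ ρ) \ (π ∩ ρ)).ncard = Nat.card K) := by
  classical
  obtain ⟨Wπ, hWπ3, rfl⟩ := hπ
  have hWπ3 : finrank K Wπ = 3 := hWπ3
  have hS' : IsEvenType' S := fun L ⟨W, hW, hL⟩ => hS L ⟨W, by rw [hW], hL⟩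
  set q := Nat.card K with hqdef
  have hq1 : 0 < q := Nat.card_pos
  have hq2 : 2 ≤ q := by obtain ⟨k, hk⟩ := hq; omega
  constructor
  · by_cases hne : (S ∩ pts Wπ).Nonempty
    · obtain ⟨P, hPS, hPπ⟩ := hne
      exact (key_lemma hq S hS' hcard Wπ hWπ3 P hPS hPπ).1
    · rw [Set.not_nonempty_iff_eq_empty.1 hne]
      simp
  · intro hm ρ hρ hρne
    obtain ⟨Wρ, hWρ3, rfl⟩ := hρ
    have hWρ3 : finrank K Wρ = 3 := hWρ3
    by_cases hint : (pts Wπ ∩ pts Wρ) ∩ S = ∅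
    · left; exact hint
    right
    obtain ⟨P, hPmem, hPS⟩ := Set.nonempty_iff_ne_empty.2 hint
    obtain ⟨hPπ', hPρ'⟩ := hPmem
    have hkey := (key_lemma hq S hS' hcard Wπ hWπ3 P hPS hPπ').2 hm
    have hWne : Wρ ≠ Wπ := fun h => hρne (by rw [h])
    have hrkinf : finrank K ↥(Wπ ⊓ Wρ) = 2 := by
      have hs := Submodule.finrank_sup_add_finrank_inf_eq Wπ Wρ
      rw [hWπ3, hWρ3] at hs
      have hle4 : finrank K ↥(Wπ ⊔ Wρ) ≤ 4 := by
        have h := Submodule.finrank_le (Wπ ⊔ Wρ)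
        rwa [Module.finrank_fin_fun] at h
      have h3 : finrank K ↥Wπ ≤ finrank K ↥(Wπ ⊔ Wρ) := Submodule.finrank_mono le_sup_left
      rw [hWπ3] at h3
      have hnot : finrank K ↥(Wπ ⊔ Wρ) ≠ 3 := by
        intro h
        apply hWne
        have hπeq : Wπ = Wπ ⊔ Wρ :=
          Submodule.eq_of_le_of_finrank_eq le_sup_left (by rw [hWπ3, h])
        have hle : Wρ ≤ Wπ := hπeq ▸ le_sup_right
        exact Submodule.eq_of_le_of_finrank_eq hle (by rw [hWρ3, hWπ3])
      omega
    have hPℓ : P.1 ≤ Wπ ⊓ Wρ := le_inf hPπ' hPρ'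
    have hπρ : pts Wπ ∩ pts Wρ = pts (Wπ ⊓ Wρ) := by
      ext Q
      simp only [Set.mem_inter_iff, pts, Set.mem_setOf_eq, le_inf_iff]
    have hℓmem : Wπ ⊓ Wρ ∈ linesThruIn P Wρ := mem_linesThruIn.2 ⟨hrkinf, hPℓ, inf_le_right⟩
    have hNρ : (pts Wρ).ncard = 1 + q + q^2 := by
      rw [ncard_pts, hWρ3]
      simp [Finset.sum_range_succ]
      rfl
    have hLρ : (linesThruIn P Wρ).card = 1 + q := by
      have h := card_linesThruIn P Wρ hPρ'
      rw [hNρ, ← hqdef] at h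
      have h1 : (linesThruIn P Wρ).card * q = q + q^2 := by omega
      have h2 : (1 + q) * q = q + q^2 := by ring
      exact Nat.eq_of_mul_eq_mul_right hq1 (h1.trans h2.symm)
    have ht5card : ((linesThruIn P Wρ).erase (Wπ ⊓ Wρ)).card = q := by
      rw [Finset.card_erase_of_mem hℓmem, hLρ]
      omega
    have hsum : ((S ∩ pts Wρ) \ (pts Wπ ∩ pts Wρ)).ncard
        = ∑ W ∈ (linesThruIn P Wρ).erase (Wπ ⊓ Wρ),
            (((S ∩ pts Wρ) \ (pts Wπ ∩ pts Wρ)) ∩ pts W).ncard := by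
      apply ncard_eq_sum_lines P
      · intro W hW
        have h := mem_linesThruIn.1 (Finset.mem_of_mem_erase hW)
        exact ⟨h.1, h.2.1⟩
      · rintro ⟨-, hPn⟩
        exact hPn ⟨hPπ', hPρ'⟩
      · rintro Q ⟨⟨hQS, hQρ⟩, hQn⟩
        have hQP : P ≠ Q := fun h => hQn (h ▸ ⟨hPπ', hPρ'⟩)
        refine ⟨P.1 ⊔ Q.1, Finset.mem_erase.2
          ⟨?_, sup_mem_linesThruIn hQP hPρ' hQρ⟩, le_sup_right⟩
        intro heq
        apply hQn
        rw [hπρ]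
        exact heq ▸ (le_sup_right : Q.1 ≤ P.1 ⊔ Q.1)
    have hblock : ∀ W ∈ (linesThruIn P Wρ).erase (Wπ ⊓ Wρ),
        (((S ∩ pts Wρ) \ (pts Wπ ∩ pts Wρ)) ∩ pts W).ncard = 1 := by
      intro W hW
      obtain ⟨hWne', hWmem⟩ := Finset.mem_erase.1 hW
      obtain ⟨hW2, hPW, hWρle⟩ := mem_linesThruIn.1 hWmem
      have hWnπ : ¬ W ≤ Wπ := by
        intro h
        exact hWne' (Submodule.eq_of_le_of_finrank_eq (le_inf h hWρle) (by rw [hW2, hrkinf]))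
      have hfW : (S ∩ pts W).ncard = 2 := hkey W hW2 hPW hWnπ
      have hset : ((S ∩ pts Wρ) \ (pts Wπ ∩ pts Wρ)) ∩ pts W = (S ∩ pts W) \ {P} := by
        ext Q
        simp only [Set.mem_inter_iff, Set.mem_diff, Set.mem_singleton_iff]
        constructor
        · rintro ⟨⟨⟨hQS, hQρ⟩, hQn⟩, hQW⟩
          exact ⟨⟨hQS, hQW⟩, fun h => hQn (h ▸ ⟨hPπ', hPρ'⟩)⟩
        · rintro ⟨⟨hQS, hQW⟩, hQP⟩
          refine ⟨⟨⟨hQS, le_trans hQW hWρle⟩, ?_⟩, hQW⟩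
          rintro ⟨hQπ, hQρ⟩
          have hQℓ : Q.1 ≤ Wπ ⊓ Wρ := le_inf hQπ hQρ
          have hWeq : W = P.1 ⊔ Q.1 := line_eq_sup hW2 hPW hQW (Ne.symm hQP)
          exact hWne' (Submodule.eq_of_le_of_finrank_eq
            (hWeq ▸ sup_le hPℓ hQℓ) (by rw [hW2, hrkinf]))
      have hPmem2 : P ∈ S ∩ pts W := ⟨hPS, hPW⟩
      rw [hset, Set.ncard_diff_singleton_of_mem hPmem2, hfW]
    rw [hsum, Finset.sum_congr rfl hblock, Finset.sum_const, smul_eq_mul, mul_one, ht5card]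

end Main


/-- Let `q` be an even prime power, `S` a set of even type of
size `q(q+2)` in `PG(3,q)` and `π` a plane.  Then `|S ∩ π| ≤ 2q`; moreover, if
`|S ∩ π| = 2q`, then for every plane `ρ ≠ π` the line `π ∩ ρ` is either
disjoint from `S` or a Rédei line of `ρ` with respect to `S`, i.e.
`|(S ∩ ρ) \ (π ∩ ρ)| = q`. -/
theorem stmt4 {K : Type*} [Field K] [Finite K] (hq : Even (Nat.card K))
    (S : Set (PGPoint K 3)) (hS : IsEvenType S)
    (hcard : S.ncard = Nat.card K * (Nat.card K + 2))
    (π : Set (PGPoint K 3)) (hπ : IsKSpace 2 π) :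
    (S ∩ π).ncard ≤ 2 * Nat.card K ∧
    ((S ∩ π).ncard = 2 * Nat.card K →
      ∀ ρ : Set (PGPoint K 3), IsKSpace 2 ρ → ρ ≠ π →
        (π ∩ ρ) ∩ S = ∅ ∨ ((S ∩ ρ) \ (π ∩ ρ)).ncard = Nat.card K) := by
  have hS2 : IsEvenType2 S := fun L hL => hS L hL
  exact stmt4' hq S hS2 hcard π hπ
end

section
/- Let q be an even prime power and let S be a set of even type of size q(q+2) in PG(3,q). If some line of PG(3,q) contains exactly q points of S, then S is a hypercylinder. -/
open Submodule

open Module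

namespace Stmt5Aux

set_option linter.unusedSectionVars false

variable {K : Type*} [Field K] [Finite K]

local notation "V4" => Fin (3+1) → K
local notation "q" => Nat.card K

abbrev Pt (K : Type*) [Field K] := PGPoint K 3

lemma finrank_V4 : finrank K V4 = 4 := finrank_fin_fun K

instance {n : ℕ} : Finite (Submodule K (Fin (n+1) → K)) :=
  Finite.of_injective (fun W => (W : Set (Fin (n+1) → K))) SetLike.coe_injective

instance {n : ℕ} : Finite (PGPoint K n) := by unfold PGPoint; infer_instance

example : Finite (Pt K) := inferInstance

noncomputable def mkPt (v : V4) (hv : v ≠ 0) : Pt K :=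
  ⟨span K {v}, finrank_span_singleton hv⟩

lemma mkPt_mem (v : V4) (hv : v ≠ 0) {W : Submodule K V4} (h : v ∈ W) :
    (mkPt v hv).1 ≤ W := by
  simpa [mkPt, span_le] using h

lemma mem_mkPt (v : V4) (hv : v ≠ 0) : v ∈ (mkPt v hv).1 :=
  subset_span rfl

lemma pt_eq_of_mem {P : Pt K} {v : V4} (hv : v ≠ 0) (h : v ∈ P.1) :
    P.1 = span K {v} := by
  refine (eq_of_le_of_finrank_le ?_ ?_).symm
  · simpa [span_le] using h
  · rw [P.2, finrank_span_singleton hv]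

lemma pt_eq_pt {P Q : Pt K} {v : V4} (hv : v ≠ 0) (hP : v ∈ P.1) (hQ : v ∈ Q.1) :
    P = Q := Subtype.ext ((pt_eq_of_mem hv hP).trans (pt_eq_of_mem hv hQ).symm)

lemma pt_exists_mem (P : Pt K) : ∃ v : V4, v ∈ P.1 ∧ v ≠ 0 := by
  have h1 : P.1 ≠ ⊥ := by
    intro h; have := P.2; rw [h] at this; simp at this
  obtain ⟨v, hv, hv0⟩ := Submodule.exists_mem_ne_zero_of_ne_bot h1
  exact ⟨v, hv, hv0⟩

lemma exists_pt_le {W : Submodule K V4} (h : W ≠ ⊥) : ∃ P : Pt K, P.1 ≤ W := by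
  obtain ⟨v, hv, hv0⟩ := Submodule.exists_mem_ne_zero_of_ne_bot h
  exact ⟨mkPt v hv0, mkPt_mem v hv0 hv⟩

lemma pt_le_pt {P Q : Pt K} (h : P.1 ≤ Q.1) : P = Q :=
  Subtype.ext (eq_of_le_of_finrank_le h (by rw [P.2, Q.2]))

/-- Two distinct points span a rank-2 subspace. -/
lemma finrank_sup_pt {P Q : Pt K} (h : P ≠ Q) : finrank K ↥(P.1 ⊔ Q.1) = 2 := by
  have hinf : P.1 ⊓ Q.1 = ⊥ := by
    by_contra hne
    obtain ⟨v, hv, hv0⟩ := Submodule.exists_mem_ne_zero_of_ne_bot hne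
    exact h (pt_eq_pt hv0 hv.1 hv.2)
  have := finrank_sup_add_finrank_inf_eq P.1 Q.1
  rw [hinf, P.2, Q.2] at this
  simpa using this

lemma pts_point (P : Pt K) : pts P.1 = {P} := by
  ext Q
  simp only [pts, Set.mem_setOf_eq, Set.mem_singleton_iff]
  exact ⟨fun h => (pt_le_pt h).symm ▸ rfl, fun h => h ▸ le_rfl⟩

lemma pts_mono {W W' : Submodule K V4} (h : W ≤ W') : pts W ⊆ pts W' :=
  fun _ hP => le_trans hP h

lemma nat_geom (x d : ℕ) (hx : 1 ≤ x) :
    (∑ i ∈ Finset.range d, x ^ i) * (x - 1) = x ^ d - 1 := by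
  induction d with
  | zero => simp
  | succ d ih =>
    rw [Finset.sum_range_succ, add_mul, ih, Nat.mul_sub, pow_succ]
    have h1 : 1 ≤ x ^ d := Nat.one_le_pow _ _ hx
    have h2 : x ^ d ≤ x ^ d * x := Nat.le_mul_of_pos_right _ hx
    omega

lemma ncard_biUnion' {α ι : Type*} [Finite α] (I : Finset ι) (f : ι → Set α)
    (hdisj : ∀ i ∈ I, ∀ j ∈ I, i ≠ j → Disjoint (f i) (f j)) :
    (⋃ i ∈ I, f i).ncard = ∑ i ∈ I, (f i).ncard := by
  classical
  induction I using Finset.induction with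
  | empty => simp
  | @insert a I ha ih =>
    rw [Finset.sum_insert ha]
    have hset : (⋃ i ∈ insert a I, f i) = f a ∪ ⋃ i ∈ I, f i := by
      simp [Set.biUnion_insert]
    rw [hset, Set.ncard_union_eq, ih]
    · intro i hi j hj hij
      exact hdisj i (Finset.mem_insert_of_mem hi) j (Finset.mem_insert_of_mem hj) hij
    · rw [Set.disjoint_iUnion₂_right]
      intro i hi
      exact hdisj a (Finset.mem_insert_self a I) i (Finset.mem_insert_of_mem hi)
        (by rintro rfl; exact ha hi)


lemma two_le_q : 2 ≤ q := by
  have : Fintype K := Fintype.ofFinite K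
  rw [Nat.card_eq_fintype_card]
  exact Fintype.one_lt_card

lemma card_submodule (W : Submodule K V4) : Nat.card W = q ^ finrank K W := by
  have : Fintype K := Fintype.ofFinite K
  have : Fintype W := Fintype.ofFinite W
  rw [Nat.card_eq_fintype_card, Nat.card_eq_fintype_card, card_eq_pow_finrank (K := K)]

lemma ncard_pt_diff_zero (P : Pt K) : (((P.1 : Set V4)) \ {0}).ncard = q - 1 := by
  rw [Set.ncard_diff_singleton_of_mem (Submodule.zero_mem P.1)]
  have : (P.1 : Set V4).ncard = q := by
    rw [← Nat.card_coe_set_eq]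
    have := card_submodule P.1
    rw [P.2, pow_one] at this
    exact this
  rw [this]

lemma ncard_pts_mul (W : Submodule K V4) :
    (pts W).ncard * (q - 1) = q ^ finrank K W - 1 := by
  classical
  have hfin : (pts (K := K) W).Finite := Set.toFinite _
  have hcover : ((W : Set V4) \ {0}) = ⋃ P ∈ hfin.toFinset, ((P.1 : Set V4) \ {0}) := by
    ext x
    simp only [Set.mem_diff, Set.mem_singleton_iff, Set.mem_iUnion, SetLike.mem_coe,
      Set.Finite.mem_toFinset]
    constructor
    · rintro ⟨hxW, hx0⟩
      exact ⟨mkPt x hx0, mkPt_mem x hx0 hxW, mem_mkPt x hx0, hx0⟩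
    · rintro ⟨P, hP, hxP, hx0⟩
      exact ⟨hP hxP, hx0⟩
  have hdisj : ∀ P ∈ hfin.toFinset, ∀ Q ∈ hfin.toFinset, P ≠ Q →
      Disjoint ((P.1 : Set V4) \ {0}) ((Q.1 : Set V4) \ {0}) := by
    intro P _ Q _ hPQ
    rw [Set.disjoint_left]
    rintro x ⟨hxP, hx0⟩ ⟨hxQ, _⟩
    exact hPQ (pt_eq_pt hx0 hxP hxQ)
  have := ncard_biUnion' hfin.toFinset _ hdisj
  rw [← hcover] at this
  have hlhs : ((W : Set V4) \ {0}).ncard = q ^ finrank K W - 1 := by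
    rw [Set.ncard_diff_singleton_of_mem (Submodule.zero_mem W), ← Nat.card_coe_set_eq]
    rw [show Nat.card ↑(W : Set V4) = Nat.card W from rfl, card_submodule]
  rw [hlhs] at this
  rw [this]
  rw [Finset.sum_congr rfl (fun P _ => ncard_pt_diff_zero P), Finset.sum_const, smul_eq_mul,
    ← Set.ncard_eq_toFinset_card _ hfin]

lemma ncard_pts (W : Submodule K V4) :
    (pts W).ncard = ∑ i ∈ Finset.range (finrank K W), q ^ i := by
  have h2 : 2 ≤ q := two_le_q
  have := ncard_pts_mul W
  rw [← nat_geom q (finrank K W) (by omega)] at this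
  exact Nat.eq_of_mul_eq_mul_right (by omega) this

lemma ncard_pts_line {W : Submodule K V4} (h : finrank K W = 2) :
    (pts W).ncard = q + 1 := by
  rw [ncard_pts, h]; simp [Finset.sum_range_succ]; omega

lemma ncard_pts_le_one {W : Submodule K V4} (h : finrank K W ≤ 1) :
    (pts W).ncard ≤ 1 := by
  rw [Set.ncard_le_one_iff_eq (Set.toFinite _)]
  by_cases he : pts (K := K) W = ∅
  · left; exact he
  · right
    obtain ⟨P, hP⟩ := Set.nonempty_iff_ne_empty.mpr he
    refine ⟨P, Set.eq_singleton_iff_unique_mem.mpr ⟨hP, fun Q hQ => ?_⟩⟩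
    have hPW : P.1 = W := eq_of_le_of_finrank_le hP (h.trans (by rw [P.2]))
    exact pt_le_pt (hPW ▸ hQ)

section Interm

/-- Intermediate subspaces strictly between `U` and `W` (one rank above `U`). -/
def interm (U W : Submodule K V4) : Set (Submodule K V4) :=
  {M | U ≤ M ∧ M ≤ W ∧ finrank K M = finrank K U + 1}

noncomputable def intermFS (U W : Submodule K V4) : Finset (Submodule K V4) :=
  (Set.toFinite (interm U W)).toFinset

lemma mem_intermFS {U W M : Submodule K V4} :
    M ∈ intermFS U W ↔ U ≤ M ∧ M ≤ W ∧ finrank K M = finrank K U + 1 := by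
  rw [intermFS, Set.Finite.mem_toFinset]; rfl

lemma pt_inf_eq_bot {U : Submodule K V4} {X : Pt K} (hXU : ¬ X.1 ≤ U) :
    U ⊓ X.1 = ⊥ := by
  by_contra h
  obtain ⟨v, hv, hv0⟩ := Submodule.exists_mem_ne_zero_of_ne_bot h
  have : X.1 = span K {v} := pt_eq_of_mem hv0 hv.2
  exact hXU (this ▸ (by simpa [span_le] using hv.1))

lemma finrank_sup_pt_of_not_le {U : Submodule K V4} {X : Pt K} (hXU : ¬ X.1 ≤ U) :
    finrank K ↥(U ⊔ X.1) = finrank K U + 1 := by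
  have := finrank_sup_add_finrank_inf_eq U X.1
  rw [pt_inf_eq_bot hXU, X.2] at this
  simpa using this

lemma sup_pt_mem_intermFS {U W : Submodule K V4} (hUW : U ≤ W) {X : Pt K}
    (hXW : X.1 ≤ W) (hXU : ¬ X.1 ≤ U) : U ⊔ X.1 ∈ intermFS U W :=
  mem_intermFS.mpr ⟨le_sup_left, sup_le hUW hXW, finrank_sup_pt_of_not_le hXU⟩

lemma intermFS_eq_sup {U W M : Submodule K V4} (hM : M ∈ intermFS U W) {X : Pt K}
    (hXM : X.1 ≤ M) (hXU : ¬ X.1 ≤ U) : M = U ⊔ X.1 := by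
  obtain ⟨h1, _, h3⟩ := mem_intermFS.mp hM
  exact (eq_of_le_of_finrank_le (sup_le h1 hXM)
    (by rw [h3, finrank_sup_pt_of_not_le hXU])).symm

/-- The decomposition of any `T ⊆ pts W` away from `pts U` along intermediate
subspaces. -/
lemma decomp {U W : Submodule K V4} (hUW : U ≤ W) {T : Set (Pt K)} (hT : T ⊆ pts W) :
    (T \ pts U).ncard = ∑ M ∈ intermFS U W, ((T ∩ pts M) \ pts U).ncard := by
  have hcover : T \ pts U = ⋃ M ∈ intermFS U W, ((T ∩ pts M) \ pts U) := by
    ext X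
    simp only [Set.mem_diff, Set.mem_iUnion, Set.mem_inter_iff]
    constructor
    · rintro ⟨hXT, hXU⟩
      exact ⟨U ⊔ X.1, sup_pt_mem_intermFS hUW (hT hXT) hXU, ⟨hXT, (le_sup_right : X.1 ≤ U ⊔ X.1)⟩, hXU⟩
    · rintro ⟨M, _, ⟨hXT, _⟩, hXU⟩
      exact ⟨hXT, hXU⟩
  rw [hcover, ncard_biUnion']
  intro M hM N hN hMN
  rw [Set.disjoint_left]
  rintro X ⟨⟨_, hXM⟩, hXU⟩ ⟨⟨_, hXN⟩, _⟩
  exact hMN ((intermFS_eq_sup hM hXM hXU).trans (intermFS_eq_sup hN hXN hXU).symm)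

lemma ncard_pts_diff {U M : Submodule K V4} (hUM : U ≤ M)
    (hM : finrank K M = finrank K U + 1) :
    (pts M \ pts U).ncard = q ^ finrank K U := by
  rw [Set.ncard_diff (pts_mono hUM), ncard_pts, ncard_pts, hM,
    Finset.sum_range_succ]
  omega

lemma card_intermFS {U W : Submodule K V4} (hUW : U ≤ W)
    (hrk : finrank K W = finrank K U + 2) :
    (intermFS U W).card = q + 1 := by
  have h := decomp hUW (le_refl (pts W))
  have hlhs : (pts W \ pts U).ncard = q ^ (finrank K U + 1) + q ^ finrank K U := by
    rw [Set.ncard_diff (pts_mono hUW), ncard_pts, ncard_pts, hrk,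
      Finset.sum_range_succ, Finset.sum_range_succ]
    omega
  have hblocks : ∀ M ∈ intermFS U W, ((pts W ∩ pts M) \ pts U).ncard = q ^ finrank K U := by
    intro M hM
    obtain ⟨h1, h2, h3⟩ := mem_intermFS.mp hM
    rw [Set.inter_eq_self_of_subset_right (pts_mono h2)]
    exact ncard_pts_diff h1 h3
  rw [hlhs, Finset.sum_congr rfl hblocks, Finset.sum_const, smul_eq_mul] at h
  have hq : 0 < q ^ finrank K U := Nat.pow_pos (by have := two_le_q (K := K); omega)
  have : (q + 1) * q ^ finrank K U = (intermFS U W).card * q ^ finrank K U := by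
    rw [← h]; ring
  exact (Nat.eq_of_mul_eq_mul_right hq this).symm

end Interm

/-! ### Generic helpers -/

lemma sum_force {α : Type*} {s : Finset α} {f : α → ℕ} {b : ℕ}
    (h : ∀ a ∈ s, b ≤ f a) (heq : ∑ a ∈ s, f a ≤ b * s.card) :
    ∀ a ∈ s, f a = b := by
  intro a ha
  by_contra hne
  have hlt : b < f a := lt_of_le_of_ne (h a ha) (Ne.symm hne)
  have h2 : ∑ _x ∈ s, b < ∑ x ∈ s, f x := Finset.sum_lt_sum h ⟨a, ha, hlt⟩
  rw [Finset.sum_const, smul_eq_mul, mul_comm] at h2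
  omega

lemma even_ge_two {n : ℕ} (he : Even n) (h : n ≠ 0) : 2 ≤ n := by
  rcases he with ⟨k, rfl⟩; omega

lemma finrank_top4 : finrank K (⊤ : Submodule K V4) = 4 := by
  rw [finrank_top]; exact finrank_V4

lemma finrank_inf_ge (A B : Submodule K V4) :
    finrank K A + finrank K B - 4 ≤ finrank K ↥(A ⊓ B) := by
  have h1 := finrank_sup_add_finrank_inf_eq A B
  have h2 : finrank K ↥(A ⊔ B) ≤ 4 := by
    have := Submodule.finrank_le (A ⊔ B)
    rwa [finrank_V4] at this
  omega

/-- A line not inside a plane meets it in a point. -/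
lemma line_meets_plane {L π : Submodule K V4} (hL : finrank K L = 2)
    (hπ : finrank K π = 3) (hnle : ¬ L ≤ π) : ∃ P : Pt K, L ⊓ π = P.1 := by
  have hge := finrank_inf_ge L π
  rw [hL, hπ] at hge
  have hle : finrank K ↥(L ⊓ π) ≤ 1 := by
    by_contra h
    have h2 : finrank K ↥(L ⊓ π) ≤ 2 := hL ▸ Submodule.finrank_mono inf_le_left
    have : L ⊓ π = L := eq_of_le_of_finrank_le inf_le_left (by omega)
    exact hnle (this ▸ inf_le_right)
  exact ⟨⟨L ⊓ π, le_antisymm hle (by omega)⟩, rfl⟩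

/-- Two distinct rank-2 subspaces sharing a point span a rank-3 subspace. -/
lemma finrank_sup_lines {L M : Submodule K V4} (hL : finrank K L = 2)
    (hM : finrank K M = 2) (hne : M ≠ L) {P : Pt K} (hPL : P.1 ≤ L) (hPM : P.1 ≤ M) :
    finrank K ↥(L ⊔ M) = 3 := by
  have hinfle : finrank K ↥(L ⊓ M) ≤ 2 := hL ▸ Submodule.finrank_mono inf_le_left
  have hinfne : finrank K ↥(L ⊓ M) ≠ 2 := by
    intro h
    have h1 : L ⊓ M = L := eq_of_le_of_finrank_le inf_le_left (by omega)
    have h2 : L ⊓ M = M := eq_of_le_of_finrank_le inf_le_right (by omega)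
    exact hne (h2.symm.trans h1)
  have hinfge : 1 ≤ finrank K ↥(L ⊓ M) := by
    have : P.1 ≤ L ⊓ M := le_inf hPL hPM
    have := Submodule.finrank_mono this
    rw [P.2] at this; omega
  have := finrank_sup_add_finrank_inf_eq L M
  rw [hL, hM] at this
  omega

lemma inter_pts_of_le {S : Set (Pt K)} {M σ : Submodule K V4} (h : M ≤ σ) :
    (S ∩ pts σ) ∩ pts M = S ∩ pts M := by
  rw [Set.inter_assoc, Set.inter_eq_self_of_subset_right (pts_mono h)]

lemma not_le_pt_iff {X P : Pt K} : ¬ X.1 ≤ P.1 ↔ X ≠ P := by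
  constructor
  · rintro h rfl; exact h le_rfl
  · intro h h2; exact h (pt_le_pt h2)

/-! ### Main lemmas -/

/-- Lemma A: counting through planes containing the special line. -/
lemma lemA {S : Set (Pt K)} {Wl : Submodule K V4}
    (heven : ∀ M : Submodule K V4, finrank K M = 2 → Even (S ∩ pts M).ncard)
    (hWlr : finrank K Wl = 2)
    (hScard : S.ncard = q * (q + 2)) (hSl : (S ∩ pts Wl).ncard = q)
    {P : Pt K} (hPl : P.1 ≤ Wl) (hPS : P ∈ S) :
    (∀ π ∈ intermFS Wl (⊤ : Submodule K V4), ((S ∩ pts π) \ pts Wl).ncard = q) ∧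
    (∀ M : Submodule K V4, finrank K M = 2 → P.1 ≤ M → M ≠ Wl →
      (S ∩ pts M).ncard = 2) := by
  classical
  have hq2 : 2 ≤ q := two_le_q
  have hrk4 : finrank K (⊤ : Submodule K V4) = finrank K Wl + 2 := by
    rw [finrank_top4, hWlr]
  have hScount : (S \ pts Wl).ncard = q * q + q := by
    rw [← Set.diff_self_inter, Set.ncard_diff Set.inter_subset_left, hScard, hSl]
    ring_nf
    omega
  have hI : (intermFS Wl (⊤ : Submodule K V4)).card = q + 1 :=
    card_intermFS le_top hrk4
  have houter := decomp (le_top (a := Wl)) (T := S) (fun X _ => (le_top : X.1 ≤ ⊤))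
  -- the split identity for each plane π through Wl
  have hsplit : ∀ π ∈ intermFS Wl (⊤ : Submodule K V4),
      ((S ∩ pts π) \ pts P.1).ncard = ((S ∩ pts π) \ pts Wl).ncard + (q - 1) := by
    intro π hπ
    obtain ⟨hlπ, _, hπr⟩ := mem_intermFS.mp hπ
    have hU : (S ∩ pts π) \ pts P.1 =
        ((S ∩ pts π) \ pts Wl) ∪ ((S ∩ pts Wl) \ {P}) := by
      rw [pts_point]
      ext X
      simp only [Set.mem_diff, Set.mem_union, Set.mem_inter_iff, Set.mem_singleton_iff]
      constructor
      · rintro ⟨⟨hXS, hXπ⟩, hXP⟩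
        by_cases hXl : X ∈ pts Wl
        · exact Or.inr ⟨⟨hXS, hXl⟩, hXP⟩
        · exact Or.inl ⟨⟨hXS, hXπ⟩, hXl⟩
      · rintro (⟨⟨hXS, hXπ⟩, hXl⟩ | ⟨⟨hXS, hXl⟩, hXP⟩)
        · refine ⟨⟨hXS, hXπ⟩, ?_⟩
          rintro rfl; exact hXl hPl
        · exact ⟨⟨hXS, pts_mono hlπ hXl⟩, hXP⟩
    rw [hU, Set.ncard_union_eq]
    · congr 1
      rw [Set.ncard_diff_singleton_of_mem (Set.mem_inter hPS hPl), hSl]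
    · rw [Set.disjoint_left]
      rintro X ⟨_, hXl⟩ ⟨⟨_, hXl'⟩, _⟩
      exact hXl hXl'
  -- per-plane lower bound on lines through P, and the final per-line forcing
  have hperplane : ∀ π ∈ intermFS Wl (⊤ : Submodule K V4),
      q ≤ ((S ∩ pts π) \ pts Wl).ncard ∧
      (((S ∩ pts π) \ pts Wl).ncard = q →
        ∀ M ∈ (intermFS P.1 π).erase Wl, (S ∩ pts M).ncard = 2) := by
    intro π hπ
    obtain ⟨hlπ, _, hπr⟩ := mem_intermFS.mp hπ
    have hπr3 : finrank K π = finrank K (P.1) + 2 := by rw [P.2, hπr, hWlr]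
    have hPπ : P.1 ≤ π := le_trans hPl hlπ
    have hinner := decomp hPπ (T := S ∩ pts π) Set.inter_subset_right
    have hWlmem : Wl ∈ intermFS P.1 π :=
      mem_intermFS.mpr ⟨hPl, hlπ, by rw [P.2, hWlr]⟩
    have hterm : ∀ M ∈ (intermFS P.1 π).erase Wl,
        ((S ∩ pts π ∩ pts M) \ pts P.1).ncard = (S ∩ pts M).ncard - 1 := by
      intro M hM
      obtain ⟨h1, h2, h3⟩ := mem_intermFS.mp (Finset.mem_of_mem_erase hM)
      rw [inter_pts_of_le h2, pts_point, Set.ncard_diff_singleton_of_mem (Set.mem_inter hPS h1)]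
    have htermge : ∀ M ∈ (intermFS P.1 π).erase Wl,
        1 ≤ ((S ∩ pts π ∩ pts M) \ pts P.1).ncard := by
      intro M hM
      obtain ⟨h1, h2, h3⟩ := mem_intermFS.mp (Finset.mem_of_mem_erase hM)
      rw [hterm M hM]
      have hev := heven M (by rw [h3, P.2])
      have hne : (S ∩ pts M).ncard ≠ 0 :=
        (Set.ncard_pos (Set.toFinite _)).mpr ⟨P, Set.mem_inter hPS h1⟩ |>.ne'
      have := even_ge_two hev hne
      omega
    have hWlterm : ((S ∩ pts π ∩ pts Wl) \ pts P.1).ncard = q - 1 := by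
      rw [inter_pts_of_le hlπ, pts_point, Set.ncard_diff_singleton_of_mem (Set.mem_inter hPS hPl), hSl]
    have hcardI : (intermFS P.1 π).card = q + 1 := card_intermFS hPπ hπr3
    have hsum : ((S ∩ pts π) \ pts P.1).ncard
        = (q - 1) + ∑ M ∈ (intermFS P.1 π).erase Wl,
            ((S ∩ pts π ∩ pts M) \ pts P.1).ncard := by
      rw [hinner, ← Finset.sum_erase_add _ _ hWlmem, hWlterm]
      ring
    have hcarderase : ((intermFS P.1 π).erase Wl).card = q :=
      by rw [Finset.card_erase_of_mem hWlmem, hcardI]; omega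
    constructor
    · have hge : q ≤ ∑ M ∈ (intermFS P.1 π).erase Wl,
          ((S ∩ pts π ∩ pts M) \ pts P.1).ncard := by
        calc q = ∑ _M ∈ (intermFS P.1 π).erase Wl, 1 := by
                rw [Finset.sum_const, hcarderase, smul_eq_mul, mul_one]
          _ ≤ _ := Finset.sum_le_sum htermge
      have := hsplit π hπ
      omega
    · intro hq0 M hM
      have hforce : ∀ M ∈ (intermFS P.1 π).erase Wl,
          ((S ∩ pts π ∩ pts M) \ pts P.1).ncard = 1 := by
        apply sum_force htermge
        have h1 := hsplit π hπ
        rw [hq0] at h1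
        rw [mul_comm, hcarderase]
        omega
      have h2 := hforce M hM
      rw [hterm M hM] at h2
      obtain ⟨h1', _, _⟩ := mem_intermFS.mp (Finset.mem_of_mem_erase hM)
      have hne : (S ∩ pts M).ncard ≠ 0 :=
        (Set.ncard_pos (Set.toFinite _)).mpr ⟨P, Set.mem_inter hPS h1'⟩ |>.ne'
      omega
  -- outer forcing
  have houterforce : ∀ π ∈ intermFS Wl (⊤ : Submodule K V4),
      ((S ∩ pts π) \ pts Wl).ncard = q := by
    apply sum_force (fun π hπ => (hperplane π hπ).1)
    have : ∀ π ∈ intermFS Wl (⊤ : Submodule K V4),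
        (S ∩ pts π) \ pts Wl = (S ∩ pts π) \ pts Wl := fun _ _ => rfl
    rw [← houter, hScount, mul_comm, hI]
    ring_nf
    omega
  refine ⟨houterforce, ?_⟩
  intro M hMr hPM hMWl
  have hsup3 : finrank K ↥(Wl ⊔ M) = 3 := finrank_sup_lines hWlr hMr hMWl hPl hPM
  have hπmem : Wl ⊔ M ∈ intermFS Wl (⊤ : Submodule K V4) :=
    mem_intermFS.mpr ⟨le_sup_left, le_top, by rw [hsup3, hWlr]⟩
  have hMmem : M ∈ (intermFS P.1 (Wl ⊔ M)).erase Wl := by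
    rw [Finset.mem_erase]
    exact ⟨hMWl, mem_intermFS.mpr ⟨hPM, le_sup_right, by rw [hMr, P.2]⟩⟩
  exact (hperplane _ hπmem).2 (houterforce _ hπmem) M hMmem

/-- Counting the points of `S` in a plane `ρ` through the pencil of lines
through a point `Y ∈ S ∩ pts ρ`. -/
lemma plane_count {S : Set (Pt K)} {ρ : Submodule K V4} (hρ : finrank K ρ = 3)
    {Y : Pt K} (hYρ : Y.1 ≤ ρ) (hYS : Y ∈ S) :
    (S ∩ pts ρ).ncard
      = 1 + ∑ M ∈ intermFS Y.1 ρ, ((S ∩ pts M).ncard - 1) := by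
  have hρr : finrank K ρ = finrank K (Y.1) + 2 := by rw [Y.2, hρ]
  have hdec := decomp hYρ (T := S ∩ pts ρ) Set.inter_subset_right
  have hterm : ∀ M ∈ intermFS Y.1 ρ,
      ((S ∩ pts ρ ∩ pts M) \ pts Y.1).ncard = (S ∩ pts M).ncard - 1 := by
    intro M hM
    obtain ⟨h1, h2, _⟩ := mem_intermFS.mp hM
    rw [inter_pts_of_le h2, pts_point, Set.ncard_diff_singleton_of_mem (Set.mem_inter hYS h1)]
  rw [Finset.sum_congr rfl hterm] at hdec
  have hYmem : Y ∈ S ∩ pts ρ := Set.mem_inter hYS hYρ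
  rw [pts_point, Set.ncard_diff_singleton_of_mem hYmem] at hdec
  have hpos : 1 ≤ (S ∩ pts ρ).ncard :=
    (Set.ncard_pos (Set.toFinite _)).mpr ⟨Y, hYmem⟩
  omega

/-- Lemma B/C: any line avoiding `V` meets `S` in at most two points
(in fact `0` or `2`). -/
lemma lemC {S : Set (Pt K)} {Wl : Submodule K V4}
    (heven : ∀ M : Submodule K V4, finrank K M = 2 → Even (S ∩ pts M).ncard)
    (hWlr : finrank K Wl = 2)
    (hScard : S.ncard = q * (q + 2)) (hSl : (S ∩ pts Wl).ncard = q)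
    {V : Pt K} (hVl : V.1 ≤ Wl)
    (hlS : ∀ P : Pt K, P.1 ≤ Wl → P ≠ V → P ∈ S)
    {N : Submodule K V4} (hNr : finrank K N = 2) (hVN : ¬ V.1 ≤ N) :
    (S ∩ pts N).ncard ≤ 2 := by
  classical
  have hq2 : 2 ≤ q := two_le_q
  -- find a plane ρ containing N avoiding V
  have hcardN : (intermFS N (⊤ : Submodule K V4)).card = q + 1 :=
    card_intermFS le_top (by rw [finrank_top4, hNr])
  have : ∃ ρ ∈ intermFS N (⊤ : Submodule K V4), ¬ V.1 ≤ ρ := by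
    by_contra h
    push_neg at h
    have hle1 : (intermFS N (⊤ : Submodule K V4)).card ≤ 1 := by
      apply Finset.card_le_one.mpr
      intro a ha b hb
      rw [intermFS_eq_sup ha (h a ha) hVN, intermFS_eq_sup hb (h b hb) hVN]
    omega
  obtain ⟨ρ, hρmem, hVρ⟩ := this
  obtain ⟨hNρ, -, hρr'⟩ := mem_intermFS.mp hρmem
  have hρr : finrank K ρ = 3 := by rw [hρr', hNr]
  -- the point P = Wl ⊓ ρ lies in S
  have hWlρ : ¬ Wl ≤ ρ := fun h => hVρ (le_trans hVl h)
  obtain ⟨P, hP⟩ := line_meets_plane hWlr hρr hWlρ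
  have hPl : P.1 ≤ Wl := hP ▸ inf_le_left
  have hPρ : P.1 ≤ ρ := hP ▸ inf_le_right
  have hPV : P ≠ V := by
    rintro rfl
    exact hVρ hPρ
  have hPS : P ∈ S := hlS P hPl hPV
  have hA := (lemA heven hWlr hScard hSl hPl hPS).2
  -- |S ∩ ρ| = q + 2
  have hcount := plane_count hρr hPρ hPS
  have hcardP : (intermFS P.1 ρ).card = q + 1 :=
    card_intermFS hPρ (by rw [P.2, hρr])
  have hterms : ∀ M ∈ intermFS P.1 ρ, (S ∩ pts M).ncard - 1 = 1 := by
    intro M hM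
    obtain ⟨h1, h2, h3⟩ := mem_intermFS.mp hM
    have hMWl : M ≠ Wl := by
      rintro rfl
      exact hWlρ h2
    rw [hA M (by rw [h3, P.2]) h1 hMWl]
  rw [Finset.sum_congr rfl hterms, Finset.sum_const, hcardP, smul_eq_mul, mul_one] at hcount
  -- now handle the line N
  rcases Set.eq_empty_or_nonempty (S ∩ pts N) with he | ⟨X, hXS, hXN⟩
  · rw [he]; simp
  -- X ∈ S on N; redo the pencil count at X
  have hXρ : X.1 ≤ ρ := le_trans hXN hNρ
  have hcount2 := plane_count hρr hXρ hXS
  rw [hcount] at hcount2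
  have hcardX : (intermFS X.1 ρ).card = q + 1 :=
    card_intermFS hXρ (by rw [X.2, hρr])
  have htermge : ∀ M ∈ intermFS X.1 ρ, 1 ≤ (S ∩ pts M).ncard - 1 := by
    intro M hM
    obtain ⟨h1, _, h3⟩ := mem_intermFS.mp hM
    have hev := heven M (by rw [h3, X.2])
    have hne : (S ∩ pts M).ncard ≠ 0 :=
      (Set.ncard_pos (Set.toFinite _)).mpr ⟨X, Set.mem_inter hXS h1⟩ |>.ne'
    have := even_ge_two hev hne
    omega
  have hforce : ∀ M ∈ intermFS X.1 ρ, (S ∩ pts M).ncard - 1 = 1 := by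
    apply sum_force htermge
    rw [mul_comm, hcardX]
    omega
  have hNmem : N ∈ intermFS X.1 ρ :=
    mem_intermFS.mpr ⟨hXN, hNρ, by rw [hNr, X.2]⟩
  have := hforce N hNmem
  have hne : (S ∩ pts N).ncard ≠ 0 :=
    (Set.ncard_pos (Set.toFinite _)).mpr ⟨X, Set.mem_inter hXS hXN⟩ |>.ne'
  omega

/-- Two distinct lines in a common plane meet in a point. -/
lemma lines_meet_in_plane {t w π : Submodule K V4} (ht : finrank K t = 2)
    (hw : finrank K w = 2) (hne : t ≠ w) (htπ : t ≤ π) (hwπ : w ≤ π)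
    (hπ : finrank K π = 3) : ∃ P : Pt K, t ⊓ w = P.1 := by
  have hsup : finrank K ↥(t ⊔ w) ≤ 3 := by
    have := Submodule.finrank_mono (sup_le htπ hwπ)
    omega
  have hsumeq := finrank_sup_add_finrank_inf_eq t w
  rw [ht, hw] at hsumeq
  have hle : finrank K ↥(t ⊓ w) ≤ 1 := by
    by_contra h
    have h2 : finrank K ↥(t ⊓ w) ≤ 2 := ht ▸ Submodule.finrank_mono inf_le_left
    have h3 : t ⊓ w = t := eq_of_le_of_finrank_le inf_le_left (by omega)
    have h4 : t ⊓ w = w := eq_of_le_of_finrank_le inf_le_right (by omega)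
    exact hne (h3.symm.trans h4)
  exact ⟨⟨t ⊓ w, le_antisymm hle (by omega)⟩, rfl⟩

/-- Lemma D: a line through `V` meeting `S` is contained in `S` except for `V`. -/
lemma lemD {S : Set (Pt K)} {Wl : Submodule K V4}
    (heven : ∀ M : Submodule K V4, finrank K M = 2 → Even (S ∩ pts M).ncard)
    (hWlr : finrank K Wl = 2)
    (hScard : S.ncard = q * (q + 2)) (hSl : (S ∩ pts Wl).ncard = q)
    {V : Pt K} (hVl : V.1 ≤ Wl) (hVS : V ∉ S)
    (hlS : ∀ P : Pt K, P.1 ≤ Wl → P ≠ V → P ∈ S)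
    {M : Submodule K V4} (hMr : finrank K M = 2) (hVM : V.1 ≤ M) (hMWl : M ≠ Wl)
    (hMne : (S ∩ pts M).Nonempty) :
    S ∩ pts M = pts M \ {V} := by
  classical
  have hq2 : 2 ≤ q := two_le_q
  obtain ⟨X, hXS, hXM⟩ := hMne
  have hXV : X ≠ V := fun h => hVS (h ▸ hXS)
  have hXWl : ¬ X.1 ≤ Wl := by
    intro hXl
    have hXsupV : finrank K ↥(X.1 ⊔ V.1) = 2 := finrank_sup_pt hXV
    have h1 : X.1 ⊔ V.1 = M :=
      eq_of_le_of_finrank_le (sup_le hXM hVM) (by rw [hXsupV, hMr])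
    have h2 : X.1 ⊔ V.1 = Wl :=
      eq_of_le_of_finrank_le (sup_le hXl hVl) (by rw [hXsupV, hWlr])
    exact hMWl (h1 ▸ h2 ▸ rfl)
  -- a base point of S on the line Wl
  have hbase : ∃ P : Pt K, P.1 ≤ Wl ∧ P ≠ V := by
    have hcard : (pts Wl).ncard = q + 1 := ncard_pts_line hWlr
    have : (pts Wl \ {V}).ncard = q := by
      rw [Set.ncard_diff_singleton_of_mem (show V ∈ pts Wl from hVl), hcard]
      omega
    have : (pts Wl \ {V}).Nonempty := by
      rw [← Set.ncard_pos (Set.toFinite _), this]; omega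
    obtain ⟨P, hP1, hP2⟩ := this
    exact ⟨P, hP1, by simpa using hP2⟩
  obtain ⟨P₀, hP₀l, hP₀V⟩ := hbase
  have hP₀S : P₀ ∈ S := hlS P₀ hP₀l hP₀V
  have houterforce := (lemA heven hWlr hScard hSl hP₀l hP₀S).1
  -- the plane π through Wl and X
  have hπr : finrank K ↥(Wl ⊔ X.1) = 3 := by
    rw [finrank_sup_pt_of_not_le hXWl, hWlr]
  have hπmem : Wl ⊔ X.1 ∈ intermFS Wl (⊤ : Submodule K V4) :=
    mem_intermFS.mpr ⟨le_sup_left, le_top, by rw [hπr, hWlr]⟩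
  set π := Wl ⊔ X.1 with hπdef
  have hXπ : X.1 ≤ π := le_sup_right
  -- M is the line joining V and X
  have hMeq : V.1 ⊔ X.1 = M := by
    refine eq_of_le_of_finrank_le (sup_le hVM hXM) ?_
    rw [show finrank K ↥(V.1 ⊔ X.1) = 2 from
      (by rw [sup_comm]; exact finrank_sup_pt hXV), hMr]
  -- collinearity: every point of S ∩ π off Wl lies on M
  have hcol : ∀ Y ∈ (S ∩ pts π) \ pts Wl, Y ∈ pts M \ ({V} : Set (Pt K)) := by
    rintro Y ⟨⟨hYS, hYπ⟩, hYl⟩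
    have hYV : Y ≠ V := fun h => hVS (h ▸ hYS)
    refine ⟨?_, by simpa using hYV⟩
    by_cases hYX : Y = X
    · subst hYX; exact hXM
    -- the line XY meets Wl in V
    have htr : finrank K ↥(X.1 ⊔ Y.1) = 2 := finrank_sup_pt (Ne.symm hYX)
    have htWl : X.1 ⊔ Y.1 ≠ Wl := by
      intro h
      exact hXWl (h ▸ le_sup_left)
    obtain ⟨P', hP'⟩ := lines_meet_in_plane htr hWlr htWl
      (sup_le hXπ hYπ) le_sup_left hπr
    have hP'l : P'.1 ≤ Wl := hP' ▸ inf_le_right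
    have hP't : P'.1 ≤ X.1 ⊔ Y.1 := hP' ▸ inf_le_left
    have hP'V : P' = V := by
      by_contra hne
      have hP'S : P' ∈ S := hlS P' hP'l hne
      have h2 := (lemA heven hWlr hScard hSl hP'l hP'S).2 (X.1 ⊔ Y.1) htr hP't htWl
      have hsub : ({X, Y, P'} : Set (Pt K)) ⊆ S ∩ pts (X.1 ⊔ Y.1) := by
        rintro Z (rfl | rfl | rfl)
        · exact Set.mem_inter hXS (show Z.1 ≤ Z.1 ⊔ Y.1 from le_sup_left)
        · exact Set.mem_inter hYS (show Z.1 ≤ X.1 ⊔ Z.1 from le_sup_right)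
        · exact Set.mem_inter hP'S hP't
      have hXP' : X ≠ P' := by
        rintro rfl; exact hXWl hP'l
      have hYP' : Y ≠ P' := by
        rintro rfl; exact hYl hP'l
      have h3 : ({X, Y, P'} : Set (Pt K)).ncard = 3 :=
        Set.ncard_eq_three.mpr ⟨X, Y, P', Ne.symm hYX, hXP', hYP', rfl⟩
      have := Set.ncard_le_ncard hsub (Set.toFinite _)
      omega
    -- so V ≤ X ⊔ Y, hence Y ∈ M
    have hVt : V.1 ≤ X.1 ⊔ Y.1 := hP'V ▸ hP't
    have : V.1 ⊔ X.1 ≤ X.1 ⊔ Y.1 := sup_le hVt le_sup_left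
    have heq : V.1 ⊔ X.1 = X.1 ⊔ Y.1 :=
      eq_of_le_of_finrank_le this (by rw [htr, hMeq, hMr])
    show Y.1 ≤ M
    rw [← hMeq, heq]
    exact le_sup_right
  -- cardinalities force equality
  have hT'card : ((S ∩ pts π) \ pts Wl).ncard = q := houterforce π hπmem
  have hMcard : (pts M \ ({V} : Set (Pt K))).ncard = q := by
    rw [Set.ncard_diff_singleton_of_mem (show V ∈ pts M from hVM), ncard_pts_line hMr]
    omega
  have hTeq : (S ∩ pts π) \ pts Wl = pts M \ ({V} : Set (Pt K)) := by
    apply Set.eq_of_subset_of_ncard_le hcol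
    rw [hT'card, hMcard]
  -- conclude
  ext Z
  constructor
  · rintro ⟨hZS, hZM⟩
    refine ⟨hZM, ?_⟩
    simp only [Set.mem_singleton_iff]
    rintro rfl
    exact hVS hZS
  · rintro ⟨hZM, hZV⟩
    have hZπ : Z ∈ (S ∩ pts π) \ pts Wl := by
      rw [hTeq]
      exact ⟨hZM, hZV⟩
    exact ⟨hZπ.1.1, hZM⟩

lemma ncard_pts_sdiff_pt {m : Submodule K V4} (hm : finrank K m = 2) {V : Pt K}
    (hV : V.1 ≤ m) : (pts m \ {V}).ncard = q := by
  rw [Set.ncard_diff_singleton_of_mem (show V ∈ pts m from hV), ncard_pts_line hm]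
  have := two_le_q (K := K)
  omega

/-- The σ-plane bound: a plane through `V` contains at most `2q+1` points of `S`. -/
lemma lemSigma {S : Set (Pt K)} {Wl : Submodule K V4}
    (heven : ∀ M : Submodule K V4, finrank K M = 2 → Even (S ∩ pts M).ncard)
    (hWlr : finrank K Wl = 2)
    (hScard : S.ncard = q * (q + 2)) (hSl : (S ∩ pts Wl).ncard = q)
    {V : Pt K} (hVl : V.1 ≤ Wl)
    (hlS : ∀ P : Pt K, P.1 ≤ Wl → P ≠ V → P ∈ S)
    {σ : Submodule K V4} (hσ : finrank K σ = 3) (hVσ : V.1 ≤ σ)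
    {X₁ : Pt K} (hX₁S : X₁ ∈ S) (hX₁σ : X₁.1 ≤ σ) (hX₁V : X₁ ≠ V) :
    (S ∩ pts σ).ncard ≤ 2 * q + 1 := by
  classical
  have hm₁r : finrank K ↥(V.1 ⊔ X₁.1) = 2 := finrank_sup_pt (Ne.symm hX₁V)
  set m₁ := V.1 ⊔ X₁.1 with hm₁def
  have hm₁σ : m₁ ≤ σ := sup_le hVσ hX₁σ
  have hm₁mem : m₁ ∈ intermFS X₁.1 σ :=
    mem_intermFS.mpr ⟨le_sup_right, hm₁σ, by rw [hm₁r, X₁.2]⟩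
  have hcount := plane_count hσ hX₁σ hX₁S
  have hcardI : (intermFS X₁.1 σ).card = q + 1 :=
    card_intermFS hX₁σ (by rw [X₁.2, hσ])
  -- bound the terms
  have hterm_m₁ : (S ∩ pts m₁).ncard - 1 ≤ q := by
    have h1 : (S ∩ pts m₁).ncard ≤ q + 1 := by
      have := Set.ncard_le_ncard (Set.inter_subset_right (s := S) (t := pts m₁))
        (Set.toFinite _)
      rw [ncard_pts_line hm₁r] at this
      exact this
    omega
  have hterm_rest : ∀ t ∈ (intermFS X₁.1 σ).erase m₁, (S ∩ pts t).ncard - 1 ≤ 1 := by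
    intro t ht
    obtain ⟨h1, h2, h3⟩ := mem_intermFS.mp (Finset.mem_of_mem_erase ht)
    have hVt : ¬ V.1 ≤ t := by
      intro hVt
      have : m₁ ≤ t := sup_le hVt h1
      have heq : m₁ = t := eq_of_le_of_finrank_le this (by rw [hm₁r, h3, X₁.2])
      exact (Finset.ne_of_mem_erase ht) heq.symm
    have := lemC heven hWlr hScard hSl hVl hlS (by rw [h3, X₁.2]) hVt
    omega
  have hsum : ∑ t ∈ intermFS X₁.1 σ, ((S ∩ pts t).ncard - 1) ≤ 2 * q := by
    rw [← Finset.sum_erase_add _ _ hm₁mem]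
    have h1 : ∑ t ∈ (intermFS X₁.1 σ).erase m₁, ((S ∩ pts t).ncard - 1)
        ≤ ((intermFS X₁.1 σ).erase m₁).card • 1 :=
      Finset.sum_le_card_nsmul _ _ 1 hterm_rest
    have h2 : ((intermFS X₁.1 σ).erase m₁).card = q := by
      rw [Finset.card_erase_of_mem hm₁mem, hcardI]; omega
    rw [h2, smul_eq_mul, mul_one] at h1
    omega
  omega

/-- Lines through `V` meeting `S`: key description. -/
lemma lemKey {S : Set (Pt K)} {Wl : Submodule K V4}
    (heven : ∀ M : Submodule K V4, finrank K M = 2 → Even (S ∩ pts M).ncard)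
    (hWlr : finrank K Wl = 2)
    (hScard : S.ncard = q * (q + 2)) (hSl : (S ∩ pts Wl).ncard = q)
    {V : Pt K} (hVl : V.1 ≤ Wl) (hVS : V ∉ S)
    (hlS : ∀ P : Pt K, P.1 ≤ Wl → P ≠ V → P ∈ S)
    {m : Submodule K V4} (hMr : finrank K m = 2) (hVm : V.1 ≤ m)
    (hne : (S ∩ pts m).Nonempty) :
    S ∩ pts m = pts m \ {V} := by
  by_cases hml : m = Wl
  · subst hml
    apply Set.eq_of_subset_of_ncard_le
    · rintro X ⟨hXS, hXm⟩
      refine ⟨hXm, ?_⟩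
      simp only [Set.mem_singleton_iff]
      rintro rfl
      exact hVS hXS
    · rw [Set.ncard_diff_singleton_of_mem (show V ∈ pts m from hVl),
        ncard_pts_line hWlr, hSl]
      omega
    · exact Set.toFinite _
  · exact lemD heven hWlr hScard hSl hVl hVS hlS hMr hVm hml hne

/-- The point where a line through `V` meets a complement of `V`. -/
lemma compl_point {V : Pt K} {Wπ : Submodule K V4} (hc : IsCompl V.1 Wπ)
    {m : Submodule K V4} (hm : finrank K m = 2) (hVm : V.1 ≤ m) :
    ∃ P : Pt K, P.1 = m ⊓ Wπ ∧ V.1 ⊔ P.1 = m ∧ P.1 ≤ Wπ ∧ P ≠ V := by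
  have hWπr : finrank K Wπ = 3 := by
    have := finrank_add_eq_of_isCompl hc
    rw [V.2, finrank_V4] at this
    omega
  have hsup : m ⊔ Wπ = ⊤ := by
    have h1 : V.1 ⊔ Wπ = ⊤ := hc.sup_eq_top
    exact top_unique (h1 ▸ sup_le_sup_right hVm Wπ)
  have hinfr : finrank K ↥(m ⊓ Wπ) = 1 := by
    have := finrank_sup_add_finrank_inf_eq m Wπ
    rw [hsup, finrank_top4, hm, hWπr] at this
    omega
  refine ⟨⟨m ⊓ Wπ, hinfr⟩, rfl, ?_, inf_le_right, ?_⟩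
  · refine eq_of_le_of_finrank_le (sup_le hVm inf_le_left) ?_
    have hne : (⟨m ⊓ Wπ, hinfr⟩ : Pt K) ≠ V := by
      intro h
      have h2 : V.1 ≤ Wπ := by rw [← h]; exact inf_le_right
      have h3 : V.1 = ⊥ := by
        have := hc.inf_eq_bot
        rwa [inf_eq_left.mpr h2] at this
      have := V.2
      rw [h3] at this
      simp at this
    rw [hm, finrank_sup_pt (Ne.symm hne)]
  · intro h
    have h2 : V.1 ≤ Wπ := by rw [← h]; exact inf_le_right
    have h3 : V.1 = ⊥ := by
      have := hc.inf_eq_bot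
      rwa [inf_eq_left.mpr h2] at this
    have := V.2
    rw [h3] at this
    simp at this

/-- Two distinct lines through `V` meet only in `V`. -/
lemma lines_disj {V : Pt K} {m m' : Submodule K V4} (hm : finrank K m = 2)
    (hm' : finrank K m' = 2) (hVm : V.1 ≤ m) (hVm' : V.1 ≤ m') (hne : m ≠ m') :
    Disjoint (pts m \ {V}) (pts m' \ {V}) := by
  rw [Set.disjoint_left]
  rintro X ⟨hXm, hXV⟩ ⟨hXm', _⟩
  simp only [Set.mem_singleton_iff] at hXV
  have hXV' : X ≠ V := hXV
  have h1 : V.1 ⊔ X.1 = m :=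
    eq_of_le_of_finrank_le (sup_le hVm hXm)
      (by rw [hm, finrank_sup_pt (Ne.symm hXV')])
  have h2 : V.1 ⊔ X.1 = m' :=
    eq_of_le_of_finrank_le (sup_le hVm' hXm')
      (by rw [hm', finrank_sup_pt (Ne.symm hXV')])
  exact hne (h1.symm.trans h2)

end Stmt5Aux

open Stmt5Aux in
/-- Let `q` be an even prime power and `S` a set of even type
of size `q(q+2)` in `PG(3,q)`.  If some line of `PG(3,q)` contains exactly `q`
points of `S`, then `S` is a hypercylinder. -/
theorem stmt5 {K : Type*} [Field K] [Finite K] (hq : Even (Nat.card K))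
    (S : Set (PGPoint K 3)) (hS : IsEvenType S)
    (hcard : S.ncard = Nat.card K * (Nat.card K + 2))
    (hline : ∃ ℓ : Set (PGPoint K 3), IsKSpace 1 ℓ ∧
      (ℓ ∩ S).ncard = Nat.card K) :
    IsHypercylinder S := by
  classical
  obtain ⟨ℓ, ⟨Wl, hWlr2, rfl⟩, hlq⟩ := hline
  have hWlr : Module.finrank K Wl = 2 := hWlr2
  have hq2 : 2 ≤ Nat.card K := two_le_q
  have heven : ∀ M : Submodule K (Fin (3+1) → K), Module.finrank K M = 2 →
      Even (S ∩ pts M).ncard := fun M hM => hS (pts M) ⟨M, hM, rfl⟩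
  have hSl : (S ∩ pts Wl).ncard = Nat.card K := by rwa [Set.inter_comm] at hlq
  -- the unique hole V on the line ℓ
  have hVex : ∃ V : PGPoint K 3, pts Wl \ S = {V} := by
    apply Set.ncard_eq_one.mp
    have h1 : pts Wl \ S = pts Wl \ (S ∩ pts Wl) := (Set.diff_inter_self_eq_diff).symm
    rw [h1, Set.ncard_diff Set.inter_subset_right, ncard_pts_line hWlr, hSl]
    omega
  obtain ⟨V, hVeq⟩ := hVex
  have hVmem : V ∈ pts Wl \ S := hVeq ▸ rfl
  have hVl : V.1 ≤ Wl := hVmem.1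
  have hVS : V ∉ S := hVmem.2
  have hlS : ∀ P : PGPoint K 3, P.1 ≤ Wl → P ≠ V → P ∈ S := by
    intro P hPl hPV
    by_contra hPS
    have h2 : P ∈ pts Wl \ S := ⟨hPl, hPS⟩
    rw [hVeq] at h2
    exact hPV h2
  -- the family of lines through V meeting S
  set Mset : Set (Submodule K (Fin (3+1) → K)) :=
    {m | V.1 ≤ m ∧ Module.finrank K m = 2 ∧ (S ∩ pts m).Nonempty} with hMsetdef
  have hMfin : Mset.Finite := Set.toFinite _
  have hkey : ∀ m ∈ Mset, S ∩ pts m = pts m \ {V} := by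
    rintro m ⟨h1, h2, h3⟩
    exact lemKey heven hWlr hcard hSl hVl hVS hlS h2 h1 h3
  have hblock : ∀ m ∈ hMfin.toFinset, (pts m \ ({V} : Set (PGPoint K 3))).ncard
      = Nat.card K := by
    intro m hm
    rw [Set.Finite.mem_toFinset] at hm
    exact ncard_pts_sdiff_pt hm.2.1 hm.1
  have hcover : S = ⋃ m ∈ hMfin.toFinset, (pts m \ {V}) := by
    ext X
    simp only [Set.mem_iUnion, Set.Finite.mem_toFinset]
    constructor
    · intro hXS
      have hXV : X ≠ V := fun h => hVS (h ▸ hXS)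
      refine ⟨V.1 ⊔ X.1, ⟨le_sup_left, finrank_sup_pt (Ne.symm hXV),
        ⟨X, hXS, (le_sup_right : X.1 ≤ _)⟩⟩, ?_⟩
      exact ⟨(le_sup_right : X.1 ≤ _), by simpa using hXV⟩
    · rintro ⟨m, hm, hXm⟩
      rw [← hkey m hm] at hXm
      exact hXm.1
  have hdisjM : ∀ m ∈ hMfin.toFinset, ∀ m' ∈ hMfin.toFinset, m ≠ m' →
      Disjoint (pts m \ ({V} : Set (PGPoint K 3))) (pts m' \ {V}) := by
    intro m hm m' hm' hne
    rw [Set.Finite.mem_toFinset] at hm hm'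
    exact lines_disj hm.2.1 hm'.2.1 hm.1 hm'.1 hne
  have hScount : S.ncard = hMfin.toFinset.card * Nat.card K := by
    conv_lhs => rw [hcover]
    rw [ncard_biUnion' _ _ hdisjM, Finset.sum_congr rfl hblock, Finset.sum_const,
      smul_eq_mul]
  have hMcard : hMfin.toFinset.card = Nat.card K + 2 := by
    rw [hcard, mul_comm] at hScount
    exact (Nat.eq_of_mul_eq_mul_right (by omega) hScount.symm)
  -- a complement of V
  obtain ⟨Wπ, hc⟩ := Submodule.exists_isCompl V.1
  have hWπr : Module.finrank K Wπ = 3 := by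
    have := finrank_add_eq_of_isCompl hc
    rw [V.2, finrank_V4] at this
    omega
  have hVWπ : ¬ V.1 ≤ Wπ := by
    intro h2
    have h3 : V.1 = ⊥ := by
      have := hc.inf_eq_bot
      rwa [inf_eq_left.mpr h2] at this
    have := V.2
    rw [h3] at this
    simp at this
  -- the hyperoval
  set O : Set (PGPoint K 3) := {P | P.1 ≤ Wπ ∧ V.1 ⊔ P.1 ∈ Mset} with hOdef
  have himg : (fun P : PGPoint K 3 => V.1 ⊔ P.1) '' O = Mset := by
    apply Set.Subset.antisymm
    · rintro _ ⟨P, hP, rfl⟩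
      exact hP.2
    · intro m hm
      obtain ⟨P, hP1, hP2, hP3, _⟩ := compl_point hc hm.2.1 hm.1
      exact ⟨P, ⟨hP3, by rw [hP2]; exact hm⟩, hP2⟩
  have hinj : Set.InjOn (fun P : PGPoint K 3 => V.1 ⊔ P.1) O := by
    intro P hP P' hP' heq
    simp only at heq
    obtain ⟨P₀, hP₀1, _, _, _⟩ := compl_point hc hP.2.2.1 hP.2.1
    have h1 : P = P₀ := pt_le_pt (hP₀1 ▸ le_inf le_sup_right hP.1)
    have h2 : P' = P₀ := pt_le_pt (hP₀1 ▸ le_inf (heq ▸ le_sup_right) hP'.1)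
    exact h1.trans h2.symm
  have hOcard : O.ncard = Nat.card K + 2 := by
    have h1 : Mset.ncard = O.ncard := by
      rw [← himg, Set.ncard_image_of_injOn hinj]
    rw [← h1, Set.ncard_eq_toFinset_card _ hMfin, hMcard]
  -- no three points of O are collinear
  have hoval3 : ∀ L : Set (PGPoint K 3), IsKSpace 1 L → (O ∩ L).ncard ≤ 2 := by
    rintro L ⟨WL, hWLr2, rfl⟩
    have hWLr : Module.finrank K WL = 2 := hWLr2
    by_contra hgt
    push_neg at hgt
    obtain ⟨O₁, hO₁, O₂, hO₂, O₃, hO₃, h12, h13, h23⟩ :=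
      (Set.two_lt_ncard (Set.toFinite _)).mp hgt
    -- WL lies in Wπ, so V is not on it
    have hWLWπ : WL ≤ Wπ := by
      have hr : Module.finrank K ↥(O₁.1 ⊔ O₂.1) = 2 := finrank_sup_pt h12
      have h1 : O₁.1 ⊔ O₂.1 = WL :=
        eq_of_le_of_finrank_le (sup_le hO₁.2 hO₂.2) (by rw [hr, hWLr])
      rw [← h1]
      exact sup_le hO₁.1.1 hO₂.1.1
    have hVWL : ¬ V.1 ≤ WL := fun h => hVWπ (le_trans h hWLWπ)
    -- the plane σ through WL and V
    have hσr : Module.finrank K ↥(WL ⊔ V.1) = 3 := by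
      rw [finrank_sup_pt_of_not_le hVWL, hWLr]
    set σ := WL ⊔ V.1 with hσdef
    have hVσ : V.1 ≤ σ := le_sup_right
    -- the three lines m_i = V ⊔ O_i
    have hOV : ∀ A : PGPoint K 3, A ∈ O ∩ pts WL → A ≠ V := by
      rintro A ⟨hA, _⟩ rfl
      exact hVWπ hA.1
    have hmem : ∀ A : PGPoint K 3, A ∈ O ∩ pts WL → V.1 ⊔ A.1 ∈ Mset :=
      fun A hA => hA.1.2
    have hmle : ∀ A : PGPoint K 3, A ∈ O ∩ pts WL → V.1 ⊔ A.1 ≤ σ :=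
      fun A hA => sup_le hVσ (le_trans hA.2 le_sup_left)
    have hmne : ∀ A B : PGPoint K 3, A ∈ O ∩ pts WL → B ∈ O ∩ pts WL → A ≠ B →
        V.1 ⊔ A.1 ≠ V.1 ⊔ B.1 := by
      intro A B hA hB hAB heq
      obtain ⟨P₀, hP₀1, _, _, _⟩ := compl_point hc (hmem A hA).2.1 (hmem A hA).1
      have h1 : A = P₀ := pt_le_pt (hP₀1 ▸ le_inf le_sup_right hA.1.1)
      have h2 : B = P₀ := pt_le_pt (hP₀1 ▸ le_inf (heq ▸ le_sup_right) hB.1.1)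
      exact hAB (h1.trans h2.symm)
    -- the three line-chunks are in S ∩ pts σ and pairwise disjoint
    have hchunk : ∀ A : PGPoint K 3, A ∈ O ∩ pts WL →
        pts (V.1 ⊔ A.1) \ {V} ⊆ S ∩ pts σ := by
      intro A hA X hX
      rw [← hkey _ (hmem A hA)] at hX
      exact ⟨hX.1, pts_mono (hmle A hA) hX.2⟩
    have hchunkcard : ∀ A : PGPoint K 3, A ∈ O ∩ pts WL →
        (pts (V.1 ⊔ A.1) \ ({V} : Set (PGPoint K 3))).ncard = Nat.card K := by
      intro A hA
      exact ncard_pts_sdiff_pt (hmem A hA).2.1 le_sup_left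
    have hdisj12 : Disjoint (pts (V.1 ⊔ O₁.1) \ ({V} : Set (PGPoint K 3)))
        (pts (V.1 ⊔ O₂.1) \ {V}) :=
      lines_disj (hmem _ hO₁).2.1 (hmem _ hO₂).2.1 le_sup_left le_sup_left
        (hmne _ _ hO₁ hO₂ h12)
    have hdisj13 : Disjoint (pts (V.1 ⊔ O₁.1) \ ({V} : Set (PGPoint K 3)))
        (pts (V.1 ⊔ O₃.1) \ {V}) :=
      lines_disj (hmem _ hO₁).2.1 (hmem _ hO₃).2.1 le_sup_left le_sup_left
        (hmne _ _ hO₁ hO₃ h13)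
    have hdisj23 : Disjoint (pts (V.1 ⊔ O₂.1) \ ({V} : Set (PGPoint K 3)))
        (pts (V.1 ⊔ O₃.1) \ {V}) :=
      lines_disj (hmem _ hO₂).2.1 (hmem _ hO₃).2.1 le_sup_left le_sup_left
        (hmne _ _ hO₂ hO₃ h23)
    have hlow : 3 * Nat.card K ≤ (S ∩ pts σ).ncard := by
      have hsub : (pts (V.1 ⊔ O₁.1) \ {V}) ∪ ((pts (V.1 ⊔ O₂.1) \ {V}) ∪
          (pts (V.1 ⊔ O₃.1) \ {V})) ⊆ S ∩ pts σ := by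
        apply Set.union_subset (hchunk _ hO₁)
        exact Set.union_subset (hchunk _ hO₂) (hchunk _ hO₃)
      have hc3 : ((pts (V.1 ⊔ O₁.1) \ {V}) ∪ ((pts (V.1 ⊔ O₂.1) \ {V}) ∪
          (pts (V.1 ⊔ O₃.1) \ ({V} : Set (PGPoint K 3))))).ncard = 3 * Nat.card K := by
        rw [Set.ncard_union_eq (Set.disjoint_union_right.mpr ⟨hdisj12, hdisj13⟩),
          Set.ncard_union_eq hdisj23, hchunkcard _ hO₁, hchunkcard _ hO₂,
          hchunkcard _ hO₃]
        ring
      calc 3 * Nat.card K = _ := hc3.symm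
        _ ≤ (S ∩ pts σ).ncard := Set.ncard_le_ncard hsub (Set.toFinite _)
    -- a point X₁ of S on the first line
    have hX₁ex : (pts (V.1 ⊔ O₁.1) \ ({V} : Set (PGPoint K 3))).Nonempty := by
      rw [← Set.ncard_pos (Set.toFinite _), hchunkcard _ hO₁]
      omega
    obtain ⟨X₁, hX₁⟩ := hX₁ex
    have hX₁S : X₁ ∈ S := by
      rw [← hkey _ (hmem _ hO₁)] at hX₁
      exact hX₁.1
    have hX₁σ : X₁.1 ≤ σ := le_trans hX₁.1 (hmle _ hO₁)
    have hX₁V : X₁ ≠ V := by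
      have := hX₁.2
      simpa using this
    have hupper := lemSigma heven hWlr hcard hSl hVl hlS hσr hVσ hX₁S hX₁σ hX₁V
    omega
  -- assemble the hypercylinder
  refine ⟨Wπ, V.1, O, hWπr, by rw [V.2], by rw [inf_comm]; exact hc.inf_eq_bot,
    ⟨fun P hP => hP.1, hOcard, hoval3⟩, ?_⟩
  ext X
  simp only [Set.mem_setOf_eq]
  constructor
  · intro hXS
    have hXV : X ≠ V := fun h => hVS (h ▸ hXS)
    have hm : V.1 ⊔ X.1 ∈ Mset :=
      ⟨le_sup_left, finrank_sup_pt (Ne.symm hXV), ⟨X, hXS, (le_sup_right : X.1 ≤ _)⟩⟩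
    obtain ⟨P, hP1, hP2, hP3, _⟩ := compl_point hc hm.2.1 hm.1
    refine ⟨⟨P, ⟨hP3, by rw [hP2]; exact hm⟩, ?_⟩, ?_⟩
    · rw [sup_comm, hP2]
      exact le_sup_right
    · exact not_le_pt_iff.mpr hXV
  · rintro ⟨⟨P, hPO, hXP⟩, hXV⟩
    have hm : V.1 ⊔ P.1 ∈ Mset := hPO.2
    have hXm : X ∈ pts (V.1 ⊔ P.1) := by
      rw [sup_comm] at hXP
      exact hXP
    have hXne : X ≠ V := not_le_pt_iff.mp hXV
    have hXmem : X ∈ pts (V.1 ⊔ P.1) \ {V} := ⟨hXm, by simpa using hXne⟩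
    rw [← hkey _ hm] at hXmem
    exact hXmem.1
end

section
/- Let q = p^h with p prime and q > 2, let n ≥ 2, let c be a codeword of C_{n−1}(n,q), and let P be a point of PG(n,q). Then the feet of P with respect to supp(c) span a projective subspace that does not contain P; equivalently, a vector representing P does not lie in the 𝔽_q-linear span of vectors representing the feet of P. -/
open Submodule

/-- The code `C_{n-1}(n,q)` of points and hyperplanes of `PG(n, K)` over
`𝔽_p`: the span of the characteristic functions of hyperplanes. -/
def hypCode (K : Type*) [Field K] (p n : ℕ) :
    Submodule (ZMod p) (PGPoint K n → ZMod p) :=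
  Submodule.span (ZMod p)
    {f : PGPoint K n → ZMod p | ∃ W : Submodule K (Fin (n + 1) → K),
      Module.finrank K W = n ∧ f = (pts W).indicator fun _ => 1}

/-- The feet of a point `P` with respect to a point set `S`: the points
`R ∈ S \ {P}` such that the line `⟨P, R⟩` meets `S \ {P}` only in `R`. -/
def feet {K : Type*} [Field K] {n : ℕ} (P : PGPoint K n)
    (S : Set (PGPoint K n)) : Set (PGPoint K n) :=
  {R | R ∈ S ∧ R ≠ P ∧ (pts (P.1 ⊔ R.1) ∩ S) \ {P} = {R}}

section StmtAux

variable {K : Type*} [Field K] {n : ℕ}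

lemma aux_nonzero {U : Submodule K (Fin (n + 1) → K)}
    (hU : Module.finrank K U = 1) : ∃ x ∈ U, x ≠ 0 := by
  rcases (Submodule.ne_bot_iff U).mp (fun hb => by rw [hb] at hU; simp at hU) with ⟨x, hx, h0⟩
  exact ⟨x, hx, h0⟩

lemma aux_span_eq {U : Submodule K (Fin (n + 1) → K)}
    (hU : Module.finrank K U = 1) {x : Fin (n + 1) → K} (hx : x ∈ U) (hx0 : x ≠ 0) :
    U = K ∙ x := by
  have hle : (K ∙ x) ≤ U := (Submodule.span_singleton_le_iff_mem x U).mpr hx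
  exact (Submodule.eq_of_le_of_finrank_eq hle
    (by rw [finrank_span_singleton hx0, hU])).symm

lemma aux_indep {P R : PGPoint K n} (hne : R ≠ P) {pv v : Fin (n + 1) → K}
    (hP : P.1 = K ∙ pv) (hR : R.1 = K ∙ v) (hpv : pv ≠ 0) :
    ∀ a b : K, a • pv + b • v = 0 → a = 0 ∧ b = 0 := by
  intro a b hab
  by_cases hb : b = 0
  · subst hb
    rw [zero_smul, add_zero] at hab
    rcases smul_eq_zero.mp hab with h | h
    · exact ⟨h, rfl⟩
    · exact absurd h hpv
  · exfalso
    have hvmem : v ∈ (K ∙ pv) := by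
      refine Submodule.mem_span_singleton.mpr ⟨-(b⁻¹ * a), ?_⟩
      have h3 : a • pv = -(b • v) := add_eq_zero_iff_eq_neg.mp hab
      rw [neg_smul, mul_smul, h3, smul_neg, neg_neg, inv_smul_smul₀ hb]
    have hle : R.1 ≤ P.1 := by
      rw [hR, hP, Submodule.span_singleton_le_iff_mem]; exact hvmem
    exact hne (Subtype.ext (Submodule.eq_of_le_of_finrank_eq hle (R.2.trans P.2.symm)))

lemma aux_param_ne_zero {pv v : Fin (n + 1) → K}
    (hind : ∀ a b : K, a • pv + b • v = 0 → a = 0 ∧ b = 0) (s : K) :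
    v + s • pv ≠ 0 := by
  intro h
  have h2 : s • pv + (1 : K) • v = 0 := by
    rw [show s • pv + (1 : K) • v = v + s • pv by module]
    exact h
  exact one_ne_zero (hind s 1 h2).2

lemma aux_param_inj {pv v : Fin (n + 1) → K}
    (hind : ∀ a b : K, a • pv + b • v = 0 → a = 0 ∧ b = 0) {s s' : K}
    (hss : (K ∙ (v + s • pv)) = (K ∙ (v + s' • pv))) : s = s' := by
  have h1 : v + s • pv ∈ (K ∙ (v + s' • pv)) := by
    rw [← hss]; exact Submodule.mem_span_singleton_self _
  rcases Submodule.mem_span_singleton.mp h1 with ⟨μ, hμ⟩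
  have key : (s - μ * s') • pv + (1 - μ) • v = 0 := by
    have : (s - μ * s') • pv + (1 - μ) • v = (v + s • pv) - μ • (v + s' • pv) := by
      rw [smul_add, smul_smul, sub_smul, sub_smul, one_smul]; abel
    rw [this, ← hμ, sub_self]
  have h2 := hind _ _ key
  have hμ1 : μ = 1 := by
    have := h2.2; linear_combination -this
  have := h2.1
  rw [hμ1, one_mul] at this
  linear_combination this

lemma aux_param_ne_pv {pv v : Fin (n + 1) → K}
    (hind : ∀ a b : K, a • pv + b • v = 0 → a = 0 ∧ b = 0) (s : K) :
    (K ∙ pv : Submodule K (Fin (n + 1) → K)) ≠ K ∙ (v + s • pv) := by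
  intro hss
  have h1 : v + s • pv ∈ (K ∙ pv) := by
    rw [hss]; exact Submodule.mem_span_singleton_self _
  rcases Submodule.mem_span_singleton.mp h1 with ⟨μ, hμ⟩
  have key : (s - μ) • pv + (1 : K) • v = 0 := by
    rw [sub_smul, one_smul, hμ]; abel
  exact one_ne_zero (hind _ _ key).2

lemma aux_mem_line {pv v : Fin (n + 1) → K} (s : K) :
    (K ∙ (v + s • pv)) ≤ (K ∙ pv) ⊔ (K ∙ v) := by
  rw [Submodule.span_singleton_le_iff_mem]
  exact add_mem (Submodule.mem_sup_right (Submodule.mem_span_singleton_self v))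
    (Submodule.mem_sup_left (Submodule.smul_mem _ _ (Submodule.mem_span_singleton_self pv)))

lemma aux_shift {W : Submodule K (Fin (n + 1) → K)} (hW : Module.finrank K W = n)
    {pv : Fin (n + 1) → K} (hpW : pv ∉ W) (u : Fin (n + 1) → K) :
    ∃ s : K, u + s • pv ∈ W := by
  have hlt : W < W ⊔ (K ∙ pv) := by
    refine lt_of_le_of_ne le_sup_left (fun he => ?_)
    have : pv ∈ W ⊔ (K ∙ pv) :=
      Submodule.mem_sup_right (Submodule.mem_span_singleton_self pv)
    rw [← he] at this
    exact hpW this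
  have hfr : Module.finrank K (W ⊔ (K ∙ pv) : Submodule K (Fin (n + 1) → K)) = n + 1 := by
    have h1 := Submodule.finrank_lt_finrank_of_lt hlt
    have h2 : Module.finrank K (W ⊔ (K ∙ pv) : Submodule K (Fin (n + 1) → K))
        ≤ Module.finrank K (Fin (n + 1) → K) :=
      Submodule.finrank_le _
    rw [hW] at h1
    rw [Module.finrank_fin_fun] at h2
    omega
  have htop : W ⊔ (K ∙ pv) = ⊤ :=
    Submodule.eq_top_of_finrank_eq (by rw [hfr, Module.finrank_fin_fun])
  have hu : u ∈ W ⊔ (K ∙ pv) := by rw [htop]; exact Submodule.mem_top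
  rcases Submodule.mem_sup.mp hu with ⟨y, hy, z, hz, hyz⟩
  rcases Submodule.mem_span_singleton.mp hz with ⟨a, rfl⟩
  refine ⟨-a, ?_⟩
  have : u + (-a) • pv = y := by rw [← hyz, neg_smul]; abel
  rw [this]; exact hy

lemma aux_classify {pv v : Fin (n + 1) → K} (X : PGPoint K n)
    (hX : X.1 ≤ (K ∙ pv) ⊔ (K ∙ v)) :
    X.1 = (K ∙ pv : Submodule K (Fin (n + 1) → K)) ∨
      ∃ s : K, X.1 = (K ∙ (v + s • pv) : Submodule K (Fin (n + 1) → K)) := by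
  obtain ⟨x, hxX, hx0⟩ := aux_nonzero X.2
  have hxspan : X.1 = K ∙ x := aux_span_eq X.2 hxX hx0
  have hxmem : x ∈ (K ∙ pv) ⊔ (K ∙ v) := hX hxX
  rcases Submodule.mem_sup.mp hxmem with ⟨y, hy, z, hz, hyz⟩
  rcases Submodule.mem_span_singleton.mp hy with ⟨a, rfl⟩
  rcases Submodule.mem_span_singleton.mp hz with ⟨b, rfl⟩
  by_cases hb : b = 0
  · left
    have hax : a • pv = x := by rw [← hyz, hb, zero_smul, add_zero]
    have ha : a ≠ 0 := by rintro rfl; rw [zero_smul] at hax; exact hx0 hax.symm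
    rw [hxspan, ← hax]
    exact (Submodule.span_singleton_smul_eq (IsUnit.mk0 a ha) pv).symm ▸ rfl
  · right
    refine ⟨a / b, ?_⟩
    have hbx : b • (v + (a / b) • pv) = x := by
      rw [smul_add, smul_smul, mul_div_cancel₀ a hb, ← hyz]; abel
    rw [hxspan, ← hbx]
    exact Submodule.span_singleton_smul_eq (IsUnit.mk0 b hb) _

lemma aux_sum_field (K : Type*) [Field K] [Fintype K] (hK : 2 < Fintype.card K) :
    ∑ s : K, s = 0 := by
  classical
  obtain ⟨a, ha0, ha1⟩ : ∃ a : K, a ≠ 0 ∧ a ≠ 1 := by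
    by_contra hcon
    push_neg at hcon
    have hsub : (Finset.univ : Finset K) ⊆ {0, 1} := by
      intro x _
      rcases eq_or_ne x 0 with rfl | hx
      · simp
      · simp [hcon x hx]
    have h1 := Finset.card_le_card hsub
    have h2 : ({0, 1} : Finset K).card ≤ 2 :=
      (Finset.card_insert_le _ _).trans (by simp)
    rw [Finset.card_univ] at h1
    omega
  have h1 : ∑ s : K, a * s = ∑ s : K, s :=
    Fintype.sum_bijective (fun s => a * s) (mulLeft_bijective₀ a ha0) _ _ (fun x => rfl)
  rw [← Finset.mul_sum] at h1
  have : (a - 1) * ∑ s : K, s = 0 := by rw [sub_mul, one_mul, h1, sub_self]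
  rcases mul_eq_zero.mp this with h | h
  · exact absurd (by linear_combination h) ha1
  · exact h

end StmtAux

/-- Let `q = p^h > 2` with `p` prime and `n ≥ 2`, let `c` be
a codeword of `C_{n-1}(n,q)` and `P` a point of `PG(n,q)`.  Then the feet of
`P` with respect to `supp(c)` span a projective subspace not containing `P`,
i.e. `P` (as a line of `K^{n+1}`) is not contained in the linear span of the
feet. -/


theorem stmt11 {K : Type*} [Field K] [Finite K] (p h n : ℕ) (hp : p.Prime)
    (hq : Nat.card K = p ^ h) (hq2 : 2 < Nat.card K) (hn : 2 ≤ n)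
    (c : PGPoint K n → ZMod p) (hc : c ∈ hypCode K p n) (P : PGPoint K n) :
    ¬ P.1 ≤ ⨆ R ∈ feet P {Q : PGPoint K n | c Q ≠ 0}, (R : PGPoint K n).1 := by
  intro hP
  classical
  haveI : Fact p.Prime := ⟨hp⟩
  have hh : h ≠ 0 := by rintro rfl; rw [pow_zero] at hq; omega
  haveI : Finite (Submodule K (Fin (n + 1) → K)) :=
    Finite.of_injective (fun W => (W : Set (Fin (n + 1) → K))) SetLike.coe_injective
  haveI : Finite (PGPoint K n) := by unfold PGPoint; infer_instance
  haveI := Fintype.ofFinite (PGPoint K n)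
  haveI := Fintype.ofFinite K
  haveI : DecidableEq (PGPoint K n) := Classical.decEq _
  haveI : DecidableEq K := Classical.decEq _
  -- characteristic of K is p
  haveI : CharP K (ringChar K) := ringChar.charP K
  have hrp : (ringChar K).Prime := CharP.char_is_prime K _
  obtain ⟨m, -, hcard⟩ := FiniteField.card K (ringChar K)
  have hpr : p = ringChar K := by
    have h1 : p ∣ ringChar K ^ (m : ℕ) := by
      rw [← hcard, ← Nat.card_eq_fintype_card, hq]; exact dvd_pow_self p hh
    exact (Nat.prime_dvd_prime_iff_eq hp hrp).mp (hp.dvd_of_dvd_pow h1)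
  haveI hchar : CharP K p := by rw [hpr]; infer_instance
  letI : Module (ZMod p) K := (ZMod.castHom dvd_rfl K).toModule
  haveI : NoZeroSMulDivisors (ZMod p) K := ⟨fun {a x} hax => by
    rcases eq_or_ne a 0 with rfl | ha
    · exact Or.inl rfl
    · refine Or.inr ?_
      have := congrArg (fun y => a⁻¹ • y) hax
      simpa [inv_smul_smul₀ ha] using this⟩
  -- the 𝔽ₚ-linear functional F on K with F 1 = 1
  have h1li : LinearIndepOn (ZMod p) id ({1} : Set K) :=
    LinearIndepOn.singleton one_ne_zero
  let b : Module.Basis _ (ZMod p) K := Module.Basis.extend h1li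
  have h1mem : (1 : K) ∈ h1li.extend (Set.subset_univ _) :=
    h1li.subset_extend _ rfl
  let F : K →ₗ[ZMod p] ZMod p := b.coord ⟨1, h1mem⟩
  have hF1 : F 1 = 1 := by
    have hb1 : b ⟨1, h1mem⟩ = 1 := Module.Basis.extend_apply_self h1li ⟨1, h1mem⟩
    rw [← hb1]
    simp [F, Module.Basis.coord_apply, Module.Basis.repr_self]
  have hFsum : ∑ s : K, F s = 0 := by
    rw [← map_sum, aux_sum_field K (by rw [← Nat.card_eq_fintype_card]; exact hq2), map_zero]
  -- set up the representation of P as a combination of feet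
  set Sset : Set (PGPoint K n) := {Q | c Q ≠ 0} with hSset
  obtain ⟨pv, hpvP, hpv0⟩ := aux_nonzero P.2
  have hPspan : P.1 = K ∙ pv := aux_span_eq P.2 hpvP hpv0
  have hmem : pv ∈ ⨆ R : {R // R ∈ feet P Sset}, (R : PGPoint K n).1 := by
    have h0 := hP hpvP
    rw [iSup_subtype'] at h0
    exact h0
  obtain ⟨f, hfmem, hfsum⟩ := (Submodule.mem_iSup_iff_exists_finsupp _ _).mp hmem
  rw [Finsupp.sum] at hfsum
  set t : Finset {R // R ∈ feet P Sset} := f.support with ht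
  have htne : t.Nonempty := by
    rcases Finset.eq_empty_or_nonempty t with he | hne
    · exfalso
      apply hpv0
      rw [← hfsum, he, Finset.sum_empty]
    · exact hne
  obtain ⟨i₀, hi₀⟩ := htne
  have hne : ∀ i : {R // R ∈ feet P Sset}, (i : PGPoint K n) ≠ P := fun i => i.2.2.1
  have hRspan : ∀ i ∈ t, ((i : {R // R ∈ feet P Sset}) : PGPoint K n).1 = K ∙ (f i) :=
    fun i hi => aux_span_eq (i : PGPoint K n).2 (hfmem i) (Finsupp.mem_support_iff.mp hi)
  have hind : ∀ i ∈ t, ∀ a b : K, a • pv + b • f i = 0 → a = 0 ∧ b = 0 :=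
    fun i hi => aux_indep (hne i) hPspan (hRspan i hi) hpv0
  have hfoot : ∀ (i : {R // R ∈ feet P Sset}) (X : PGPoint K n),
      X.1 ≤ P.1 ⊔ (i : PGPoint K n).1 → X ≠ P → X ≠ (i : PGPoint K n) → c X = 0 := by
    intro i X hXle hXP hXi
    by_contra hcX
    have hX : X ∈ (pts (P.1 ⊔ (i : PGPoint K n).1) ∩ Sset) \ {P} :=
      ⟨⟨hXle, hcX⟩, by simpa using hXP⟩
    rw [i.2.2.2] at hX
    exact hXi (by simpa using hX)
  have hcR : ∀ i : {R // R ∈ feet P Sset}, c (i : PGPoint K n) ≠ 0 := fun i => i.2.1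
  -- the dual vector
  let ci : {R // R ∈ feet P Sset} → ZMod p := fun i => if i = i₀ then 1 else 0
  have hcisum : ∑ i ∈ t, ci i = 1 := by
    simp only [ci]
    rw [Finset.sum_ite_eq' t i₀ (fun _ => (1 : ZMod p))]
    rw [if_pos hi₀]
  let g : {R // R ∈ feet P Sset} → PGPoint K n → ZMod p := fun i X =>
    if hx : ∃ s : K, X.1 = (K ∙ (f i + s • pv) : Submodule K (Fin (n + 1) → K)) then
      F hx.choose + ci i else 0
  let w : PGPoint K n → ZMod p := fun X => ∑ i ∈ t, g i X
  have hgeval : ∀ i ∈ t, ∀ (X : PGPoint K n) (s : K),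
      X.1 = (K ∙ (f i + s • pv) : Submodule K (Fin (n + 1) → K)) → g i X = F s + ci i := by
    intro i hi X s hXs
    have hex : ∃ s' : K, X.1 = (K ∙ (f i + s' • pv) : Submodule K (Fin (n + 1) → K)) := ⟨s, hXs⟩
    have hspec := hex.choose_spec
    have hs : hex.choose = s := aux_param_inj (hind i hi) (by rw [← hspec, hXs])
    simp only [g]
    rw [dif_pos hex, hs]
  have hgzero : ∀ (i : {R // R ∈ feet P Sset}) (X : PGPoint K n),
      (¬ ∃ s : K, X.1 = (K ∙ (f i + s • pv) : Submodule K (Fin (n + 1) → K))) → g i X = 0 := by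
    intro i X hnex
    simp only [g]
    rw [dif_neg hnex]
  have hline : ∀ i ∈ t, ∀ s : K,
      (K ∙ (f i + s • pv) : Submodule K (Fin (n + 1) → K)) ≤ P.1 ⊔ (i : PGPoint K n).1 := by
    intro i hi s
    rw [hPspan, hRspan i hi]
    exact aux_mem_line s
  -- (B) pairing of each g i with the codeword c
  have hB : ∀ i ∈ t, ∑ X : PGPoint K n, g i X * c X = ci i * c (i : PGPoint K n) := by
    intro i hi
    have h0 : ∀ X ∈ Finset.univ, X ≠ (i : PGPoint K n) → g i X * c X = 0 := by
      intro X _ hXi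
      by_cases hex : ∃ s : K, X.1 = (K ∙ (f i + s • pv) : Submodule K (Fin (n + 1) → K))
      · obtain ⟨s, hXs⟩ := hex
        have hXP : X ≠ P := by
          intro hXPe
          subst hXPe
          exact aux_param_ne_pv (hind i hi) s (hPspan.symm.trans hXs)
        have hc0 : c X = 0 := by
          refine hfoot i X ?_ hXP hXi
          rw [hXs]
          exact hline i hi s
        rw [hc0, mul_zero]
      · rw [hgzero i X hex, zero_mul]
    have h1 : (i : PGPoint K n) ∉ Finset.univ →
        g i (i : PGPoint K n) * c (i : PGPoint K n) = 0 :=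
      fun hn => absurd (Finset.mem_univ _) hn
    rw [Finset.sum_eq_single _ h0 h1]
    have hXs : ((i : PGPoint K n)).1 = (K ∙ (f i + (0 : K) • pv) : Submodule K (Fin (n + 1) → K)) := by
      rw [zero_smul, add_zero]
      exact hRspan i hi
    rw [hgeval i hi _ 0 hXs, map_zero, zero_add]
  -- (A) each hyperplane sum of w vanishes
  have hA : ∀ W : Submodule K (Fin (n + 1) → K), Module.finrank K W = n →
      ∑ X ∈ Finset.univ.filter (fun X : PGPoint K n => X ∈ pts W), w X = 0 := by
    intro W hWrank
    have hwsum : ∑ X ∈ Finset.univ.filter (fun X : PGPoint K n => X ∈ pts W), w X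
        = ∑ i ∈ t, ∑ X ∈ Finset.univ.filter (fun X : PGPoint K n => X ∈ pts W), g i X := by
      rw [← Finset.sum_comm]
    by_cases hpW : pv ∈ W
    · have hzero : ∀ i ∈ t,
          ∑ X ∈ Finset.univ.filter (fun X : PGPoint K n => X ∈ pts W), g i X = 0 := by
        intro i hi
        by_cases hfiW : f i ∈ W
        · -- the whole line lies in W
          have hsupp : ∀ X ∈ Finset.univ,
              X ∉ Finset.univ.filter (fun X : PGPoint K n => X ∈ pts W) → g i X = 0 := by
            intro X _ hX
            by_cases hex : ∃ s : K, X.1 = (K ∙ (f i + s • pv) : Submodule K (Fin (n + 1) → K))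
            · exfalso
              apply hX
              rw [Finset.mem_filter]
              obtain ⟨s, hXs⟩ := hex
              refine ⟨Finset.mem_univ _, ?_⟩
              show X.1 ≤ W
              rw [hXs, Submodule.span_singleton_le_iff_mem]
              exact W.add_mem hfiW (W.smul_mem s hpW)
            · exact hgzero i X hex
          rw [Finset.sum_subset (Finset.filter_subset _ _) hsupp]
          let e : K → PGPoint K n := fun s =>
            ⟨K ∙ (f i + s • pv), finrank_span_singleton (aux_param_ne_zero (hind i hi) s)⟩
          have himg : ∀ X ∈ Finset.univ, X ∉ Finset.image e Finset.univ → g i X = 0 := by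
            intro X _ hX
            by_cases hex : ∃ s : K, X.1 = (K ∙ (f i + s • pv) : Submodule K (Fin (n + 1) → K))
            · obtain ⟨s, hXs⟩ := hex
              exact absurd (by convert (Finset.mem_image (f := e) (s := Finset.univ) (b := X)).mpr ⟨s, Finset.mem_univ _, Subtype.ext hXs.symm⟩) hX
            · exact hgzero i X hex
          rw [← Finset.sum_subset (Finset.subset_univ _) himg]
          have hinj : ∀ x ∈ (Finset.univ : Finset K), ∀ y ∈ Finset.univ, e x = e y → x = y := by
            intro s _ s' _ hss
            have hval : (e s).1 = (e s').1 := congrArg Subtype.val hss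
            exact aux_param_inj (hind i hi) hval
          rw [Finset.sum_image hinj]
          have heval : ∀ s ∈ Finset.univ, g i (e s) = F s + ci i :=
            fun s _ => hgeval i hi (e s) s rfl
          rw [Finset.sum_congr rfl heval, Finset.sum_add_distrib, hFsum, Finset.sum_const,
            zero_add, Finset.card_univ]
          rw [← Nat.card_eq_fintype_card, hq, nsmul_eq_mul, Nat.cast_pow, ZMod.natCast_self,
            zero_pow hh, zero_mul]
        · refine Finset.sum_eq_zero ?_
          intro X hX
          by_cases hex : ∃ s : K, X.1 = (K ∙ (f i + s • pv) : Submodule K (Fin (n + 1) → K))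
          · obtain ⟨s, hXs⟩ := hex
            exfalso
            apply hfiW
            rw [Finset.mem_filter] at hX
            have hXle : X.1 ≤ W := hX.2
            have hmem2 : f i + s • pv ∈ W := by
              refine hXle ?_
              rw [hXs]
              exact Submodule.mem_span_singleton_self _
            have h3 := W.sub_mem hmem2 (W.smul_mem s hpW)
            simpa using h3
          · exact hgzero i X hex
      rw [hwsum, Finset.sum_congr rfl hzero, Finset.sum_const_zero]
    · -- pv ∉ W
      have hexs : ∀ u : Fin (n + 1) → K, ∃ s : K, u + s • pv ∈ W := aux_shift hWrank hpW
      set si : {R // R ∈ feet P Sset} → K := fun i => (hexs (f i)).choose with hsi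
      have hsiW : ∀ i, f i + si i • pv ∈ W := fun i => (hexs (f i)).choose_spec
      have hsiuniq : ∀ (i : {R // R ∈ feet P Sset}) (s : K), f i + s • pv ∈ W → s = si i := by
        intro i s hs
        by_contra hss
        apply hpW
        have hsub : (s - si i) • pv ∈ W := by
          have h2 := W.sub_mem hs (hsiW i)
          have h3 : (f i + s • pv) - (f i + si i • pv) = (s - si i) • pv := by
            rw [sub_smul]; abel
          rwa [h3] at h2
        have h4 := W.smul_mem (s - si i)⁻¹ hsub
        rwa [inv_smul_smul₀ (sub_ne_zero.mpr hss)] at h4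
      have hsisum : ∑ i ∈ t, si i = -1 := by
        have hmemW : (∑ i ∈ t, (f i + si i • pv)) ∈ W := Submodule.sum_mem _ (fun i _ => hsiW i)
        have heq2 : ∑ i ∈ t, (f i + si i • pv) = (1 + ∑ i ∈ t, si i) • pv := by
          rw [Finset.sum_add_distrib, ← Finset.sum_smul, hfsum, add_smul, one_smul]
        rw [heq2] at hmemW
        by_contra hne1
        have hne0 : (1 + ∑ i ∈ t, si i) ≠ 0 := by
          intro h0
          exact hne1 (by linear_combination h0)
        apply hpW
        have h5 := W.smul_mem (1 + ∑ i ∈ t, si i)⁻¹ hmemW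
        rwa [inv_smul_smul₀ hne0] at h5
      have hper : ∀ i ∈ t,
          ∑ X ∈ Finset.univ.filter (fun X : PGPoint K n => X ∈ pts W), g i X
            = F (si i) + ci i := by
        intro i hi
        obtain ⟨X0, hX0⟩ :
            ∃ X : PGPoint K n, X.1 = (K ∙ (f i + si i • pv) : Submodule K (Fin (n + 1) → K)) :=
          ⟨⟨_, finrank_span_singleton (aux_param_ne_zero (hind i hi) (si i))⟩, rfl⟩
        have h0 : ∀ X ∈ Finset.univ.filter (fun X : PGPoint K n => X ∈ pts W),
            X ≠ X0 → g i X = 0 := by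
          intro X hX hXX0
          by_cases hexX : ∃ s : K, X.1 = (K ∙ (f i + s • pv) : Submodule K (Fin (n + 1) → K))
          · obtain ⟨s, hXs⟩ := hexX
            exfalso
            apply hXX0
            rw [Finset.mem_filter] at hX
            have hXle : X.1 ≤ W := hX.2
            have hsW : f i + s • pv ∈ W := by
              refine hXle ?_
              rw [hXs]
              exact Submodule.mem_span_singleton_self _
            have hseq : s = si i := hsiuniq i s hsW
            apply Subtype.ext
            rw [hXs, hX0, hseq]
          · exact hgzero i X hexX
        have h1 : X0 ∉ Finset.univ.filter (fun X : PGPoint K n => X ∈ pts W) → g i X0 = 0 := by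
          intro hX0mem
          exfalso
          apply hX0mem
          rw [Finset.mem_filter]
          refine ⟨Finset.mem_univ _, ?_⟩
          show X0.1 ≤ W
          rw [hX0, Submodule.span_singleton_le_iff_mem]
          exact hsiW i
        rw [Finset.sum_eq_single _ h0 h1]
        exact hgeval i hi X0 (si i) hX0
      rw [hwsum, Finset.sum_congr rfl hper, Finset.sum_add_distrib, ← map_sum, hsisum,
        hcisum, map_neg, hF1]
      ring
  -- the pairing with any codeword vanishes
  have hcode0 : ∑ X : PGPoint K n, w X * c X = 0 := by
    refine Submodule.span_induction ?_ ?_ ?_ ?_ hc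
    · rintro f' ⟨W, hWrank, rfl⟩
      have hstep : ∀ X ∈ Finset.univ,
          w X * (pts W).indicator (fun _ => (1 : ZMod p)) X =
            if X ∈ pts W then w X else 0 := by
        intro X _
        rw [Set.indicator_apply]
        by_cases hX : X ∈ pts W
        · rw [if_pos hX, if_pos hX, mul_one]
        · rw [if_neg hX, if_neg hX, mul_zero]
      rw [Finset.sum_congr rfl hstep, ← Finset.sum_filter]
      exact hA W hWrank
    · simp
    · intro x y _ _ hx hy
      have hstep : ∀ X ∈ Finset.univ, w X * (x + y) X = w X * x X + w X * y X :=
        fun X _ => by rw [Pi.add_apply, mul_add]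
      rw [Finset.sum_congr rfl hstep, Finset.sum_add_distrib, hx, hy, add_zero]
    · intro a x _ hx
      have hstep : ∀ X ∈ Finset.univ, w X * (a • x) X = a * (w X * x X) :=
        fun X _ => by rw [Pi.smul_apply, smul_eq_mul]; ring
      rw [Finset.sum_congr rfl hstep, ← Finset.mul_sum, hx, mul_zero]
  -- but the pairing with c equals c i₀ ≠ 0
  have hfinal : ∑ X : PGPoint K n, w X * c X = c (i₀ : PGPoint K n) := by
    have hswap : ∀ X ∈ Finset.univ, w X * c X = ∑ i ∈ t, g i X * c X := by
      intro X _
      show (∑ i ∈ t, g i X) * c X = _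
      rw [Finset.sum_mul]
    rw [Finset.sum_congr rfl hswap, Finset.sum_comm, Finset.sum_congr rfl hB]
    have hci : ∀ i ∈ t, ci i * c (i : PGPoint K n)
        = if i = i₀ then c (i : PGPoint K n) else 0 := by
      intro i _
      simp only [ci]
      rw [ite_mul, one_mul, zero_mul]
    rw [Finset.sum_congr rfl hci, Finset.sum_ite_eq' t i₀ (fun i => c (i : PGPoint K n)),
      if_pos hi₀]
  rw [hcode0] at hfinal
  exact hcR i₀ hfinal.symm
end

section
/- Let q = p^h with p prime and n ≥ 2, and let c be a codeword of C_{n−1}(n,q). Then there exists a scalar β ∈ 𝔽_p such that for every subspace ρ of PG(n,q) of projective dimension at least 1, the sum ∑_{P ∈ ρ} c(P) equals β. -/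
open Submodule

open scoped Classical

section Aux

variable {K : Type*} [Field K] [Finite K] {n : ℕ}

instance inst_s12 : Finite (Submodule K (Fin (n + 1) → K)) :=
  Finite.of_injective (fun U => (U : Set (Fin (n + 1) → K))) SetLike.coe_injective

instance inst_s12_2 : Finite (PGPoint K n) := by
  unfold PGPoint; infer_instance

lemma point_eq_span {P : PGPoint K n} {v : Fin (n + 1) → K} (hv : v ∈ P.1) (h0 : v ≠ 0) :
    P.1 = span K {v} := by
  refine (Submodule.eq_of_le_of_finrank_le ((span_singleton_le_iff_mem v P.1).2 hv) ?_).symm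
  rw [P.2, finrank_span_singleton h0]

lemma pts_cover (U : Submodule K (Fin (n + 1) → K)) :
    (U : Set (Fin (n + 1) → K)) \ {0} = ⋃ P ∈ pts U, ((P.1 : Set (Fin (n + 1) → K)) \ {0}) := by
  ext v
  simp only [Set.mem_diff, Set.mem_iUnion, Set.mem_singleton_iff, SetLike.mem_coe]
  constructor
  · rintro ⟨hvU, hv0⟩
    exact ⟨⟨span K {v}, finrank_span_singleton hv0⟩,
      (span_singleton_le_iff_mem v U).2 hvU, mem_span_singleton_self v, hv0⟩
  · rintro ⟨P, hP, hvP, hv0⟩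
    exact ⟨hP hvP, hv0⟩

lemma card_count (U : Submodule K (Fin (n + 1) → K)) :
    (pts U).ncard * (Nat.card K - 1) = Nat.card K ^ Module.finrank K U - 1 := by
  classical
  haveI : Fintype K := Fintype.ofFinite K
  haveI : Fintype (Fin (n + 1) → K) := Fintype.ofFinite _
  haveI : Fintype (PGPoint K n) := Fintype.ofFinite _
  set V := Fin (n + 1) → K
  have hA : ((U : Set V) \ {0}).toFinset
      = (pts U).toFinset.biUnion (fun P => ((P.1 : Set V) \ {0}).toFinset) := by
    ext v
    simp only [Set.mem_toFinset, Finset.mem_biUnion, pts_cover U, Set.mem_iUnion]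
    tauto
  have hdisj : ∀ P ∈ (pts U).toFinset, ∀ Q ∈ (pts U).toFinset, P ≠ Q →
      Disjoint (((P : PGPoint K n).1 : Set V) \ {0}).toFinset
        (((Q : PGPoint K n).1 : Set V) \ {0}).toFinset := by
    intro P _ Q _ hPQ
    rw [Finset.disjoint_left]
    intro v hvP hvQ
    simp only [Set.mem_toFinset, Set.mem_diff, Set.mem_singleton_iff, SetLike.mem_coe] at hvP hvQ
    exact hPQ (Subtype.ext ((point_eq_span hvP.1 hvP.2).trans (point_eq_span hvQ.1 hvQ.2).symm))
  have hcardP : ∀ P : PGPoint K n, (((P.1 : Set V) \ {0}).toFinset).card = Nat.card K - 1 := by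
    intro P
    rw [← Set.ncard_eq_toFinset_card', Set.ncard_diff_singleton_of_mem (zero_mem P.1)]
    have h1 : ((P.1 : Set V)).ncard = Nat.card K := by
      rw [← Nat.card_coe_set_eq]
      have : Nat.card (P.1 : Set V) = Nat.card P.1 := rfl
      rw [this, Nat.card_eq_fintype_card, Nat.card_eq_fintype_card,
        Module.card_eq_pow_finrank (K := K) (V := P.1), P.2, pow_one]
    rw [h1]
  have hAcard : ((U : Set V) \ {0}).toFinset.card = Nat.card K ^ Module.finrank K U - 1 := by
    rw [← Set.ncard_eq_toFinset_card', Set.ncard_diff_singleton_of_mem (zero_mem U)]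
    have h1 : ((U : Set V)).ncard = Nat.card K ^ Module.finrank K U := by
      rw [← Nat.card_coe_set_eq]
      have : Nat.card (U : Set V) = Nat.card U := rfl
      rw [this, Nat.card_eq_fintype_card, Nat.card_eq_fintype_card,
        Module.card_eq_pow_finrank (K := K) (V := U)]
    rw [h1]
  calc (pts U).ncard * (Nat.card K - 1)
      = ∑ P ∈ (pts U).toFinset, (Nat.card K - 1) := by
        rw [Finset.sum_const, Set.ncard_eq_toFinset_card', smul_eq_mul]
    _ = ∑ P ∈ (pts U).toFinset, (((P.1 : Set V) \ {0}).toFinset).card := by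
        exact (Finset.sum_congr rfl fun P _ => (hcardP P).symm)
    _ = ((U : Set V) \ {0}).toFinset.card := by
        rw [hA, Finset.card_biUnion hdisj]
    _ = Nat.card K ^ Module.finrank K U - 1 := hAcard

lemma card_pts_zmod (p h : ℕ) (hp : p.Prime) (hq : Nat.card K = p ^ h)
    (U : Submodule K (Fin (n + 1) → K)) (hU : 1 ≤ Module.finrank K U) :
    ((pts U).ncard : ZMod p) = 1 := by
  have hq2 : 2 ≤ Nat.card K := by
    haveI : Fintype K := Fintype.ofFinite K
    rw [Nat.card_eq_fintype_card]
    exact Fintype.one_lt_card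
  have hh : 1 ≤ h := by
    by_contra hc
    interval_cases h
    simp [hq] at hq2 <;> omega
  have hq0 : ((Nat.card K : ZMod p)) = 0 := by
    rw [hq]
    push_cast
    rw [ZMod.natCast_self, zero_pow (by omega)]
  have key := card_count U
  have h1 : (1 : ℕ) ≤ Nat.card K ^ Module.finrank K U := Nat.one_le_pow _ _ (by omega)
  have := congrArg (Nat.cast : ℕ → ZMod p) key
  push_cast [Nat.cast_sub (by omega : (1:ℕ) ≤ Nat.card K), Nat.cast_sub h1] at this
  rw [hq0] at this
  have h2 : ((pts U).ncard : ZMod p) * (0 - 1) = 0 ^ Module.finrank K U - 1 := this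
  rw [zero_pow (by omega : Module.finrank K U ≠ 0)] at h2
  have := h2
  ring_nf at this
  linear_combination -this

end Aux


section Main

variable {K : Type*} [Field K] [Finite K] {n : ℕ}

lemma pts_inf (W H : Submodule K (Fin (n + 1) → K)) :
    pts W ∩ pts H = pts (W ⊓ H : Submodule K (Fin (n + 1) → K)) := by
  ext P
  simp only [pts, Set.mem_inter_iff, Set.mem_setOf_eq, le_inf_iff]

lemma gen_sum (p h : ℕ) (hp : p.Prime) (hq : Nat.card K = p ^ h) (hn : 2 ≤ n)
    (W H : Submodule K (Fin (n + 1) → K)) (hW : 2 ≤ Module.finrank K W)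
    (hH : Module.finrank K H = n) [Fintype (PGPoint K n)] :
    ∑ P ∈ (pts W).toFinset, (pts H).indicator (fun _ => (1 : ZMod p)) P = 1 := by
  classical
  have hinf : 1 ≤ Module.finrank K ↥(W ⊓ H) := by
    have h1 := Submodule.finrank_sup_add_finrank_inf_eq W H
    have h2 : Module.finrank K ↥(W ⊔ H) ≤ n + 1 := by
      have := Submodule.finrank_le (W ⊔ H)
      rwa [Module.finrank_fin_fun] at this
    omega
  calc ∑ P ∈ (pts W).toFinset, (pts H).indicator (fun _ => (1 : ZMod p)) P
      = ∑ P ∈ (pts W).toFinset, (if P ∈ pts H then (1 : ZMod p) else 0) := by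
        exact Finset.sum_congr rfl fun P _ => Set.indicator_apply _ _ _
    _ = (((pts W).toFinset.filter (· ∈ pts H)).card : ZMod p) := Finset.sum_boole _ _
    _ = (((pts (W ⊓ H) : Set (PGPoint K n)).toFinset).card : ZMod p) := by
        congr 1
        apply Finset.card_bij (fun P _ => P)
        · intro P hP
          rw [Finset.mem_filter, Set.mem_toFinset] at hP
          rw [Set.mem_toFinset, ← pts_inf]
          exact ⟨hP.1, hP.2⟩
        · intro P _ Q _ hPQ; exact hPQ
        · intro P hP
          rw [Set.mem_toFinset, ← pts_inf] at hP
          exact ⟨P, by rw [Finset.mem_filter, Set.mem_toFinset]; exact ⟨hP.1, hP.2⟩, rfl⟩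
    _ = 1 := by
        rw [← Set.ncard_eq_toFinset_card']
        exact card_pts_zmod p h hp hq _ hinf

end Main


/-- Let `q = p^h` with `p` prime and `n ≥ 2`, and let `c` be
a codeword of `C_{n-1}(n,q)`.  Then there is a scalar `β ∈ 𝔽_p` such that for
every projective subspace `ρ` of `PG(n,q)` of projective dimension at least `1`
(i.e. linear dimension at least `2`), the sum of `c` over the points of `ρ`
equals `β`. -/
theorem stmt12 {K : Type*} [Field K] [Finite K] (p h n : ℕ) (hp : p.Prime)
    (hq : Nat.card K = p ^ h) (hn : 2 ≤ n)
    (c : PGPoint K n → ZMod p) (hc : c ∈ hypCode K p n) :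
    ∃ β : ZMod p, ∀ W : Submodule K (Fin (n + 1) → K),
      2 ≤ Module.finrank K W → ∑ᶠ P ∈ pts W, c P = β := by
  classical
  haveI : Fintype (PGPoint K n) := Fintype.ofFinite _
  have htop : 2 ≤ Module.finrank K (⊤ : Submodule K (Fin (n + 1) → K)) := by
    rw [finrank_top, Module.finrank_fin_fun]; omega
  have key : ∀ W : Submodule K (Fin (n + 1) → K), 2 ≤ Module.finrank K W →
      ∑ P ∈ (pts W).toFinset, c P = ∑ P ∈ (pts (⊤ : Submodule K (Fin (n + 1) → K))).toFinset, c P := by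
    induction hc using Submodule.span_induction with
    | mem f hf =>
      obtain ⟨H, hH, rfl⟩ := hf
      intro W hW
      rw [gen_sum p h hp hq hn W H hW hH, gen_sum p h hp hq hn ⊤ H htop hH]
    | zero => intro W hW; simp
    | add x y hx hy ihx ihy =>
      intro W hW
      simp only [Pi.add_apply, Finset.sum_add_distrib, ihx W hW, ihy W hW]
    | smul a x hx ihx =>
      intro W hW
      simp only [Pi.smul_apply, smul_eq_mul, ← Finset.mul_sum, ihx W hW]
  refine ⟨∑ P ∈ (pts (⊤ : Submodule K (Fin (n + 1) → K))).toFinset, c P, fun W hW => ?_⟩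
  rw [← Set.coe_toFinset (pts W), finsum_mem_coe_finset]
  exact key W hW
end

section
/- Let n ≥ 2. The codewords of C_{n−1}(n,2) are exactly the following functions: the zero function, the all-one function, the characteristic functions χ_π of hyperplanes π, and the functions χ_π − χ_ρ for pairs of distinct hyperplanes π, ρ. -/
open Submodule

namespace Stmt14Aux

abbrev Dual2 (n : ℕ) := (Fin (n + 1) → ZMod 2) →ₗ[ZMod 2] ZMod 2

lemma z2 : ∀ x : ZMod 2, x = 0 ∨ x = 1 := by decide

set_option maxHeartbeats 1000000 in
lemma exists_gen {n : ℕ} (P : PGPoint (ZMod 2) n) :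
    ∃ v : Fin (n + 1) → ZMod 2, v ≠ 0 ∧ P.1 = Submodule.span (ZMod 2) {v} := by
  have h := P.2
  have hp : P.1.IsPrincipal := by
    rw [← Submodule.rank_le_one_iff_isPrincipal]
    have := Module.rank_eq_one_iff_finrank_eq_one.mpr h
    rw [this]
  obtain ⟨v, hv⟩ := hp.1
  refine ⟨v, ?_, hv⟩
  intro h0
  rw [h0, Submodule.span_zero_singleton] at hv
  rw [hv, finrank_bot] at h
  exact absurd h (by decide)

noncomputable def gen {n : ℕ} (P : PGPoint (ZMod 2) n) : Fin (n + 1) → ZMod 2 :=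
  (exists_gen P).choose

lemma gen_ne_zero {n : ℕ} (P : PGPoint (ZMod 2) n) : gen P ≠ 0 :=
  (exists_gen P).choose_spec.1

lemma span_gen {n : ℕ} (P : PGPoint (ZMod 2) n) :
    P.1 = Submodule.span (ZMod 2) {gen P} :=
  (exists_gen P).choose_spec.2

lemma le_iff {n : ℕ} (P : PGPoint (ZMod 2) n) (W : Submodule (ZMod 2) (Fin (n + 1) → ZMod 2)) :
    P.1 ≤ W ↔ gen P ∈ W := by
  rw [span_gen P]; exact Submodule.span_singleton_le_iff_mem _ _

lemma chi_ker {n : ℕ} (β : Dual2 n) :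
    (pts (LinearMap.ker β)).indicator (fun _ => (1 : ZMod 2)) =
      fun P => 1 + β (gen P) := by
  funext P
  by_cases h : P ∈ pts (LinearMap.ker β)
  · rw [Set.indicator_of_mem h]
    have h2 : gen P ∈ LinearMap.ker β := (le_iff P _).mp h
    rw [LinearMap.mem_ker] at h2
    rw [h2]; ring
  · rw [Set.indicator_of_notMem h]
    have hne : β (gen P) ≠ 0 := by
      intro h0
      exact h ((le_iff P _).mpr (LinearMap.mem_ker.mpr h0))
    rcases z2 (β (gen P)) with h1 | h1
    · exact absurd h1 hne
    · rw [h1]; decide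

lemma ev_inj {n : ℕ} (α α' : Dual2 n)
    (h : ∀ P : PGPoint (ZMod 2) n, α (gen P) = α' (gen P)) : α = α' := by
  apply LinearMap.ext
  intro v
  by_cases hv : v = 0
  · subst hv; simp
  · set P : PGPoint (ZMod 2) n :=
      ⟨Submodule.span (ZMod 2) ({v} : Set _), finrank_span_singleton hv⟩ with hP
    have h2 : v ∈ Submodule.span (ZMod 2) {gen P} := by
      rw [← span_gen P, hP]
      show v ∈ Submodule.span (ZMod 2) ({v} : Set _)
      exact Submodule.mem_span_singleton_self v
    obtain ⟨c, hc⟩ := Submodule.mem_span_singleton.mp h2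
    rw [← hc, map_smul, map_smul, h P]

lemma ker_inj {n : ℕ} (α α' : Dual2 n)
    (h : LinearMap.ker α = LinearMap.ker α') : α = α' := by
  apply ev_inj
  intro P
  have key : ∀ β : Dual2 n, β (gen P) = 0 ↔ gen P ∈ LinearMap.ker β := by
    intro β; simp [LinearMap.mem_ker]
  rcases z2 (α (gen P)) with h0 | h1
  · have : gen P ∈ LinearMap.ker α' := h ▸ (key α).mp h0
    rw [h0, ((key α').mpr this)]
  · rcases z2 (α' (gen P)) with h0' | h1'
    · have : gen P ∈ LinearMap.ker α := h ▸ (key α').mp h0'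
      rw [(key α).mpr this] at h1
      exact absurd h1 (by decide)
    · rw [h1, h1']

lemma finrank_ker {n : ℕ} (β : Dual2 n) (hβ : β ≠ 0) :
    Module.finrank (ZMod 2) (LinearMap.ker β) = n := by
  have h := LinearMap.finrank_range_add_finrank_ker β
  have hr : LinearMap.range β = ⊤ := by
    rw [LinearMap.range_eq_top]
    intro y
    obtain ⟨x, hx⟩ : ∃ x, β x ≠ 0 := by
      by_contra hc; push_neg at hc
      exact hβ (LinearMap.ext fun x => by rw [hc x, LinearMap.zero_apply])
    rcases z2 y with rfl | rfl
    · exact ⟨0, map_zero β⟩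
    · rcases z2 (β x) with h0 | h1
      · exact absurd h0 hx
      · exact ⟨x, h1⟩
  rw [hr, finrank_top] at h
  have h1 : Module.finrank (ZMod 2) (ZMod 2) = 1 := Module.finrank_self _
  have h2 : Module.finrank (ZMod 2) (Fin (n + 1) → ZMod 2) = n + 1 :=
    Module.finrank_fin_fun _
  omega

lemma exists_ker {n : ℕ} (W : Submodule (ZMod 2) (Fin (n + 1) → ZMod 2))
    (hW : Module.finrank (ZMod 2) W = n) :
    ∃ β : Dual2 n, β ≠ 0 ∧ LinearMap.ker β = W := by
  have htot : Module.finrank (ZMod 2) (Fin (n + 1) → ZMod 2) = n + 1 :=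
    Module.finrank_fin_fun _
  have hq : Module.finrank (ZMod 2) ((Fin (n + 1) → ZMod 2) ⧸ W) = 1 := by
    have := Submodule.finrank_quotient_add_finrank W
    omega
  obtain ⟨b⟩ := (finrank_eq_one_iff (Fin 1)).mp hq
  set β : Dual2 n := (b.coord 0) ∘ₗ W.mkQ with hβdef
  have hker : W ≤ LinearMap.ker β := by
    intro x hx
    rw [LinearMap.mem_ker, hβdef, LinearMap.comp_apply, Submodule.mkQ_apply,
      (Submodule.Quotient.mk_eq_zero W).mpr hx, map_zero]
  have hβ0 : β ≠ 0 := by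
    obtain ⟨x, hx⟩ := W.mkQ_surjective (b 0)
    intro h0
    have : β x = 0 := by rw [h0]; rfl
    rw [hβdef, LinearMap.comp_apply, Submodule.mkQ_apply] at this
    rw [show W.mkQ x = Submodule.Quotient.mk x from rfl] at hx
    rw [hx] at this
    simp [Module.Basis.coord_apply] at this
  refine ⟨β, hβ0, ?_⟩
  have h1 := finrank_ker β hβ0
  exact (Submodule.eq_of_le_of_finrank_le hker (by omega)).symm

end Stmt14Aux

namespace Stmt14Aux

lemma mem_span_form {n : ℕ} (c : PGPoint (ZMod 2) n → ZMod 2)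
    (hc : c ∈ Submodule.span (ZMod 2)
      {f : PGPoint (ZMod 2) n → ZMod 2 |
        ∃ W : Submodule (ZMod 2) (Fin (n + 1) → ZMod 2),
          Module.finrank (ZMod 2) W = n ∧ f = (pts W).indicator fun _ => 1}) :
    ∃ (ε : ZMod 2) (β : Dual2 n), c = fun P => ε + β (gen P) := by
  induction hc using Submodule.span_induction with
  | mem f hf =>
    obtain ⟨W, hW, rfl⟩ := hf
    obtain ⟨β, hβ0, hβk⟩ := exists_ker W hW
    exact ⟨1, β, by rw [← hβk, chi_ker]⟩
  | zero => exact ⟨0, 0, by funext P; simp⟩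
  | add f g _ _ hf hg =>
    obtain ⟨ε, β, rfl⟩ := hf
    obtain ⟨ε', β', rfl⟩ := hg
    refine ⟨ε + ε', β + β', ?_⟩
    funext P
    simp [Pi.add_apply]
    ring
  | smul a f _ hf =>
    obtain ⟨ε, β, rfl⟩ := hf
    refine ⟨a * ε, a • β, ?_⟩
    funext P
    simp [Pi.smul_apply, smul_eq_mul]
    ring

end Stmt14Aux


open Stmt14Aux in
/-- Let `n ≥ 2`.  The codewords of `C_{n-1}(n,2)` are exactly
the zero function, the all-one function, the characteristic functions of
hyperplanes, and the differences of characteristic functions of two distinct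
hyperplanes. -/
theorem stmt14 (n : ℕ) (hn : 2 ≤ n) (c : PGPoint (ZMod 2) n → ZMod 2) :
    c ∈ hypCode (ZMod 2) 2 n ↔
      c = 0 ∨ c = (fun _ => 1) ∨
      (∃ W : Submodule (ZMod 2) (Fin (n + 1) → ZMod 2),
        Module.finrank (ZMod 2) W = n ∧ c = (pts W).indicator fun _ => 1) ∨
      (∃ W₁ W₂ : Submodule (ZMod 2) (Fin (n + 1) → ZMod 2),
        W₁ ≠ W₂ ∧ Module.finrank (ZMod 2) W₁ = n ∧
        Module.finrank (ZMod 2) W₂ = n ∧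
        c = (pts W₁).indicator (fun _ => 1) -
            (pts W₂).indicator fun _ => 1) := by
  -- two special coordinate functionals
  set i0 : Fin (n + 1) := ⟨0, by omega⟩ with hi0
  set i1 : Fin (n + 1) := ⟨1, by omega⟩ with hi1
  set L0 : Dual2 n := LinearMap.proj i0 with hL0def
  set L1 : Dual2 n := LinearMap.proj i1 with hL1def
  have hL0v : ∀ v, L0 v = v i0 := fun v => rfl
  have hL1v : ∀ v, L1 v = v i1 := fun v => rfl
  have hi01 : i0 ≠ i1 := by simp [hi0, hi1, Fin.ext_iff]
  have hL0 : L0 ≠ 0 := by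
    intro h
    have := congrArg (fun f => f (Pi.single i0 (1 : ZMod 2))) (congrArg DFunLike.coe h)
    simp [hL0v, Pi.single_apply] at this
  have hL1 : L1 ≠ 0 := by
    intro h
    have := congrArg (fun f => f (Pi.single i1 (1 : ZMod 2))) (congrArg DFunLike.coe h)
    simp [hL1v, Pi.single_apply] at this
  have hL01 : L0 ≠ L1 := by
    intro h
    have := congrArg (fun f => f (Pi.single i0 (1 : ZMod 2))) (congrArg DFunLike.coe h)
    simp [hL0v, hL1v, Pi.single_apply, hi01.symm] at this
  constructor
  · intro hc
    obtain ⟨ε, β, rfl⟩ := mem_span_form c hc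
    by_cases hβ : β = 0
    · subst hβ
      rcases z2 ε with rfl | rfl
      · left; funext P; simp
      · right; left; funext P; simp
    · rcases z2 ε with rfl | rfl
      · -- difference of two hyperplanes
        right; right; right
        set α : Dual2 n := if β = L0 then L1 else L0 with hαdef
        have hα0 : α ≠ 0 := by
          rw [hαdef]; split <;> assumption
        have hαβ : α ≠ β := by
          rw [hαdef]; split
          · rename_i hb; rw [hb]; exact hL01.symm
          · rename_i hb; exact fun h => hb h.symm
        set α' : Dual2 n := β - α with hα'def
        have hα'0 : α' ≠ 0 := by
          rw [hα'def]; intro h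
          exact hαβ (by rw [sub_eq_zero] at h; exact h.symm)
        have hαα' : α ≠ α' := by
          intro h
          apply hβ
          have h2 : β = α + α' := by rw [hα'def]; abel
          rw [h2, ← h]
          have : α + α = (2 : ZMod 2) • α := by rw [two_smul]
          rw [this, show (2 : ZMod 2) = 0 by decide, zero_smul]
        refine ⟨LinearMap.ker α, LinearMap.ker α', ?_, finrank_ker α hα0,
          finrank_ker α' hα'0, ?_⟩
        · intro h
          exact hαα' (ker_inj α α' h)
        · rw [chi_ker, chi_ker]
          funext P
          have hsum : β (gen P) = α (gen P) + α' (gen P) := by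
            rw [hα'def]; simp
          rw [Pi.sub_apply, hsum]
          generalize α (gen P) = a
          generalize α' (gen P) = b
          revert a b; decide
      · -- a hyperplane
        right; right; left
        exact ⟨LinearMap.ker β, finrank_ker β hβ, (chi_ker β).symm⟩
  · intro hc
    have hmem : ∀ γ : Dual2 n, γ ≠ 0 →
        (pts (LinearMap.ker γ)).indicator (fun _ => (1 : ZMod 2)) ∈
          hypCode (ZMod 2) 2 n := by
      intro γ hγ
      exact Submodule.subset_span ⟨LinearMap.ker γ, finrank_ker γ hγ, rfl⟩
    rcases hc with rfl | rfl | ⟨W, hW, rfl⟩ | ⟨W₁, W₂, _, hW₁, hW₂, rfl⟩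
    · exact zero_mem _
    · -- all-one function
      set L2 : Dual2 n := L0 + L1 with hL2def
      have hL2 : L2 ≠ 0 := by
        rw [hL2def]; intro h
        have h2 : L0 = -L1 := by rw [← add_eq_zero_iff_eq_neg]; exact h
        apply hL01
        rw [h2]
        have : L1 + L1 = (2 : ZMod 2) • L1 := by rw [two_smul]
        have h3 : L1 + L1 = 0 := by
          rw [this, show (2 : ZMod 2) = 0 by decide, zero_smul]
        exact neg_eq_of_add_eq_zero_left h3
      have key : (fun _ : PGPoint (ZMod 2) n => (1 : ZMod 2)) =
          (pts (LinearMap.ker L0)).indicator (fun _ => 1) +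
          (pts (LinearMap.ker L1)).indicator (fun _ => 1) +
          (pts (LinearMap.ker L2)).indicator (fun _ => 1) := by
        rw [chi_ker, chi_ker, chi_ker]
        funext P
        have h2 : L2 (gen P) = L0 (gen P) + L1 (gen P) := by
          rw [hL2def]; simp
        simp only [Pi.add_apply]
        rw [h2]
        generalize L0 (gen P) = a
        generalize L1 (gen P) = b
        revert a b; decide
      rw [key]
      exact add_mem (add_mem (hmem L0 hL0) (hmem L1 hL1)) (hmem L2 hL2)
    · exact Submodule.subset_span ⟨W, hW, rfl⟩
    · exact sub_mem (Submodule.subset_span ⟨W₁, hW₁, rfl⟩)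
        (Submodule.subset_span ⟨W₂, hW₂, rfl⟩)
end
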